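/- arXiv:2408.14263 — 6 statements merged into one kernel-verified Lean document; each statement's English description precedes it below -/
import Mathlib

section
/- Let A be a finite set with |A| ≥ 3 and let m be a natural number. Every map f : L_A^m → L_A that satisfies IIA and PAR is the projection onto some coordinate: there exists i₀ with 1 ≤ i₀ ≤ m such that f(p₁,…,p_m) = p_{i₀} for all (p₁,…,p_m) ∈ L_A^m. -/
/-!
Call a coalition `U` of voters decisive for `a` over `b` if `f` ranks `a` above `b` whenever
everyone in `U` does. By independence, if `f` ranks `a` above `b` in one profile where exactly the
members of `U` do, it does so in every such profile; adding a third alternative `c` and letting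
unanimity supply the missing comparison then makes `U` decisive for `a` over `c` and for `c` over
`b`, hence for every pair. If `U` is decisive and `j ∈ U`, one profile on three alternatives shows
that `U \ {j}` or `{j}` is decisive. A minimal decisive coalition is therefore a singleton `{j}`,
and `j` is a dictator.
-/

def LinPref (A : Type*) : Type _ := {r : A → A → Prop // IsLinearOrder A r}

def restrictPref {A : Type*} (s : Set A) (r : LinPref A) : LinPref s :=
  ⟨fun x y => r.1 x.1 y.1, by
    haveI := r.2
    exact
      { refl := fun x => refl_of r.1 x.1
        trans := fun x y z hxy hyz => trans_of r.1 hxy hyz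
        antisymm := fun x y hxy hyx => Subtype.ext (antisymm_of r.1 hxy hyx)
        total := fun x y => total_of r.1 x.1 y.1 }⟩

namespace LinPref

variable {A : Type*}

instance : CoeFun (LinPref A) (fun _ => A → A → Prop) := ⟨Subtype.val⟩

instance (r : LinPref A) : IsLinearOrder A r := r.2

theorem rel_of_not_rel (r : LinPref A) {x y : A} (h : ¬ r x y) : r y x :=
  (total_of r x y).resolve_left h

theorem not_rel_of_rel (r : LinPref A) {x y : A} (hxy : x ≠ y) (h : r x y) : ¬ r y x :=
  fun h' => hxy (antisymm_of r h h')

theorem eq_of_rel_imp {r s : LinPref A} (h : ∀ x y, x ≠ y → r x y → s x y) : r = s := by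
  refine Subtype.ext (funext₂ fun x y => propext ?_)
  obtain rfl | hxy := eq_or_ne x y
  · exact iff_of_true (refl_of r _) (refl_of s _)
  refine ⟨h x y hxy, fun hs => by_contra fun hr => ?_⟩
  exact not_rel_of_rel s hxy hs (h y x hxy.symm (rel_of_not_rel r hr))

def comap {B : Type*} [LinearOrder B] (g : A → B) (hg : g.Injective) : LinPref A :=
  ⟨fun x y => g x ≤ g y,
    { refl := fun _ => le_rfl
      trans := fun _ _ _ => le_trans
      antisymm := fun _ _ h h' => hg (le_antisymm h h')
      total := fun _ _ => le_total _ _ }⟩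

variable [Fintype A]

noncomputable def ofWeight (w : A → ℕ) : LinPref A :=
  comap (fun x => toLex (w x, Fintype.equivFin A x)) fun _ _ h =>
    (Fintype.equivFin A).injective (congrArg Prod.snd (toLex.injective h))

theorem ofWeight_apply_iff {w : A → ℕ} {x y : A} (h : w x ≠ w y) :
    ofWeight w x y ↔ w x < w y := by
  change toLex (w x, _) ≤ toLex (w y, _) ↔ _
  simp [Prod.Lex.toLex_le_toLex, h]

noncomputable def ofTriple [DecidableEq A] (a b c : A) : LinPref A :=
  ofWeight fun x => if x = a then 0 else if x = b then 1 else if x = c then 2 else 3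

end LinPref

theorem Fintype.exists_ne_ne_of_three_le_card {α : Type*} [Fintype α]
    (h : 3 ≤ Fintype.card α) (x y : α) : ∃ z, z ≠ x ∧ z ≠ y :=
  ENat.exists_ne_ne_of_three_le (by simpa using h) x y

theorem restrictPref_pair_eq {A : Type*} {a b : A} (hab : a ≠ b) {r s : LinPref A}
    (h : r a b ↔ s a b) : restrictPref {a, b} r = restrictPref {a, b} s := by
  refine Subtype.ext (funext₂ fun ⟨x, hx⟩ ⟨y, hy⟩ => propext ?_)
  change r x y ↔ s x y
  rcases hx with rfl | rfl <;> rcases hy with rfl | rfl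
  · exact iff_of_true (refl_of r _) (refl_of s _)
  · exact h
  · exact ⟨fun hr => s.rel_of_not_rel fun hs => r.not_rel_of_rel hab (h.2 hs) hr,
      fun hs => r.rel_of_not_rel fun hr => s.not_rel_of_rel hab (h.1 hr) hs⟩
  · exact iff_of_true (refl_of r _) (refl_of s _)

section SocialWelfare

open LinPref

variable {A ι : Type*} (f : (ι → LinPref A) → LinPref A)

def IsIndependent : Prop :=
  ∀ (a b : A) (P Q : ι → LinPref A), (∀ i, P i a b ↔ Q i a b) → (f P a b ↔ f Q a b)

def IsUnanimous : Prop :=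
  ∀ (a b : A) (P : ι → LinPref A), (∀ i, P i a b) → f P a b

def DecisiveOver (U : Set ι) (a b : A) : Prop :=
  ∀ P : ι → LinPref A, (∀ i ∈ U, P i a b) → f P a b

def AlmostDecisiveOver (U : Set ι) (a b : A) : Prop :=
  ∀ P : ι → LinPref A, (∀ i, P i a b ↔ i ∈ U) → f P a b

def Decisive (U : Set ι) : Prop :=
  ∀ a b : A, a ≠ b → DecisiveOver f U a b

variable {f}

theorem isIndependent_of_iia
    (hIIA : ∀ a b : A, a ≠ b →
      ∃ φ : (ι → LinPref (({a, b} : Set A))) → LinPref (({a, b} : Set A)),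
        ∀ p : ι → LinPref A,
          φ (fun i => restrictPref {a, b} (p i)) = restrictPref {a, b} (f p)) :
    IsIndependent f := by
  intro a b P Q hPQ
  obtain rfl | hab := eq_or_ne a b
  · exact iff_of_true (refl_of _ a) (refl_of _ a)
  obtain ⟨φ, hφ⟩ := hIIA a b hab
  have hf : restrictPref {a, b} (f P) = restrictPref {a, b} (f Q) := by
    rw [← hφ, ← hφ, funext fun i => restrictPref_pair_eq hab (hPQ i)]
  exact iff_of_eq (congrFun₂ (congrArg Subtype.val hf) ⟨a, .inl rfl⟩ ⟨b, .inr rfl⟩)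

variable {U : Set ι} {a b c : A}

theorem IsIndependent.almostDecisiveOver (hind : IsIndependent f) {Q : ι → LinPref A}
    (hQ : ∀ i, Q i a b ↔ i ∈ U) (h : f Q a b) : AlmostDecisiveOver f U a b :=
  fun P hP => (hind a b P Q fun i => (hP i).trans (hQ i).symm).2 h

theorem DecisiveOver.almostDecisiveOver (h : DecisiveOver f U a b) :
    AlmostDecisiveOver f U a b :=
  fun P hP => h P fun i hi => (hP i).2 hi

theorem decisive_univ (hunan : IsUnanimous f) : Decisive f Set.univ :=
  fun a b _ P hP => hunan a b P fun i => hP i trivial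

theorem apply_eq_of_decisive_singleton {j : ι} (h : Decisive f {j}) (P : ι → LinPref A) :
    f P = P j :=
  (eq_of_rel_imp fun x y hxy hP => h x y hxy P fun _ hi => hi ▸ hP).symm

variable [Fintype A]

theorem isUnanimous_of_pareto (hind : IsIndependent f)
    (hPAR : ∀ p : LinPref A, f (fun _ => p) = p) : IsUnanimous f := by
  classical
  intro a b P hP
  obtain rfl | hab := eq_or_ne a b
  · exact refl_of _ a
  let q := ofWeight fun x => if x = a then 0 else 1
  have hq : q a b := by simp [q, ofWeight_apply_iff, hab.symm]
  exact (hind a b P (fun _ => q) fun _ => iff_of_true (hP _) hq).2 (by rwa [hPAR])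

theorem not_decisive_empty [Nontrivial A] : ¬ Decisive f (∅ : Set ι) := by
  intro h
  obtain ⟨a, b, hab⟩ := exists_pair_ne A
  let P : ι → LinPref A := fun _ => ofWeight 0
  exact hab (antisymm_of (f P) (h a b hab P nofun) (h b a hab.symm P nofun))

theorem AlmostDecisiveOver.decisiveOver_left (hind : IsIndependent f) (hunan : IsUnanimous f)
    (h : AlmostDecisiveOver f U a b) (hab : a ≠ b) (hca : c ≠ a) (hcb : c ≠ b) :
    DecisiveOver f U a c := by
  classical
  intro P hP
  let R : ι → LinPref A := fun i =>
    if i ∈ U then ofTriple a b c else if P i a c then ofTriple b a c else ofTriple b c a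
  have hRab : f R a b := h R fun i => by
    by_cases hi : i ∈ U <;> by_cases hPi : P i a c <;>
      simp [R, hi, hPi, ofTriple, ofWeight_apply_iff, hab, hab.symm, hca.symm]
  have hRbc : f R b c := hunan b c R fun i => by
    by_cases hi : i ∈ U <;> by_cases hPi : P i a c <;>
      simp [R, hi, hPi, ofTriple, ofWeight_apply_iff, hab.symm, hca, hcb]
  refine (hind a c P R fun i => ?_).2 (trans_of (f R) hRab hRbc)
  by_cases hi : i ∈ U
  · simp [R, hi, hP i hi, ofTriple, ofWeight_apply_iff, hca, hcb]
  · by_cases hPi : P i a c <;>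
      simp [R, hi, hPi, ofTriple, ofWeight_apply_iff, hab, hca, hca.symm, hcb]

theorem AlmostDecisiveOver.decisiveOver_right (hind : IsIndependent f) (hunan : IsUnanimous f)
    (h : AlmostDecisiveOver f U a b) (hab : a ≠ b) (hca : c ≠ a) (hcb : c ≠ b) :
    DecisiveOver f U c b := by
  classical
  intro P hP
  let R : ι → LinPref A := fun i =>
    if i ∈ U then ofTriple c a b else if P i c b then ofTriple c b a else ofTriple b c a
  have hRca : f R c a := hunan c a R fun i => by
    by_cases hi : i ∈ U <;> by_cases hPi : P i c b <;>
      simp [R, hi, hPi, ofTriple, ofWeight_apply_iff, hab, hca.symm, hcb]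
  have hRab : f R a b := h R fun i => by
    by_cases hi : i ∈ U <;> by_cases hPi : P i c b <;>
      simp [R, hi, hPi, ofTriple, ofWeight_apply_iff, hab, hab.symm, hca.symm, hcb.symm]
  refine (hind c b P R fun i => ?_).2 (trans_of (f R) hRca hRab)
  by_cases hi : i ∈ U
  · simp [R, hi, hP i hi, ofTriple, ofWeight_apply_iff, hab.symm, hcb.symm]
  · by_cases hPi : P i c b <;>
      simp [R, hi, hPi, ofTriple, ofWeight_apply_iff, hcb, hcb.symm]

theorem AlmostDecisiveOver.decisiveOver (hA : 3 ≤ Fintype.card A) (hind : IsIndependent f)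
    (hunan : IsUnanimous f) (h : AlmostDecisiveOver f U a b) (hab : a ≠ b) (hca : c ≠ a) :
    DecisiveOver f U a c := by
  obtain rfl | hcb := eq_or_ne c b
  · obtain ⟨d, hda, hdc⟩ := Fintype.exists_ne_ne_of_three_le_card hA a c
    exact (h.decisiveOver_left hind hunan hab hda hdc).almostDecisiveOver.decisiveOver_left
      hind hunan hda.symm hca hdc.symm
  · exact h.decisiveOver_left hind hunan hab hca hcb

theorem AlmostDecisiveOver.decisive (hA : 3 ≤ Fintype.card A) (hind : IsIndependent f)
    (hunan : IsUnanimous f) (h : AlmostDecisiveOver f U a b) (hab : a ≠ b) : Decisive f U := by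
  intro x y hxy
  obtain rfl | hxa := eq_or_ne x a
  · exact h.decisiveOver hA hind hunan hab hxy.symm
  obtain ⟨z, hza, hzx⟩ := Fintype.exists_ne_ne_of_three_le_card hA a x
  have hxz : DecisiveOver f U x z :=
    (h.decisiveOver hA hind hunan hab hza).almostDecisiveOver.decisiveOver_right
      hind hunan hza.symm hxa hzx.symm
  exact hxz.almostDecisiveOver.decisiveOver hA hind hunan hzx.symm hxy.symm

theorem Decisive.diff_singleton_or_singleton (hA : 3 ≤ Fintype.card A) (hind : IsIndependent f)
    (hunan : IsUnanimous f) {j : ι} (hU : Decisive f U) (hj : j ∈ U) :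
    Decisive f (U \ {j}) ∨ Decisive f {j} := by
  classical
  obtain ⟨a, b, c, hab, hac, hbc⟩ := Fintype.two_lt_card_iff.mp hA
  -- Exactly `U \ {j}` ranks `c` over `b`, and exactly `j` ranks `a` over `c`.
  let R : ι → LinPref A := fun i =>
    if i = j then ofTriple a b c else if i ∈ U then ofTriple c a b else ofTriple b c a
  have hRab : f R a b := hU a b hab R fun i hi => by
    by_cases hij : i = j <;>
      simp [R, hij, hi, ofTriple, ofWeight_apply_iff, hab.symm, hac, hbc]
  by_cases hRcb : f R c b
  · refine .inl ((hind.almostDecisiveOver (fun i => ?_) hRcb).decisive hA hind hunan hbc.symm)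
    by_cases hij : i = j
    · simp [R, hij, hj, ofTriple, ofWeight_apply_iff, hab.symm, hac.symm, hbc.symm]
    · by_cases hi : i ∈ U <;>
        simp [R, hij, hi, ofTriple, ofWeight_apply_iff, hab.symm, hbc, hbc.symm]
  · have hRac : f R a c := trans_of (f R) hRab ((f R).rel_of_not_rel hRcb)
    refine .inr ((hind.almostDecisiveOver (fun i => ?_) hRac).decisive hA hind hunan hac)
    by_cases hij : i = j
    · simp [R, hij, ofTriple, ofWeight_apply_iff, hac.symm, hbc.symm]
    · by_cases hi : i ∈ U <;>
        simp [R, hij, hi, ofTriple, ofWeight_apply_iff, hab, hac, hbc.symm]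

theorem exists_decisive_singleton [Finite ι] (hA : 3 ≤ Fintype.card A) (hind : IsIndependent f)
    (hunan : IsUnanimous f) : ∃ j, Decisive f {j} := by
  have : Nontrivial A := Fintype.one_lt_card_iff_nontrivial.mp (by omega)
  obtain ⟨U, -, hU⟩ := Finite.exists_le_minimal (decisive_univ hunan)
  obtain ⟨j, hj⟩ : U.Nonempty :=
    Set.nonempty_iff_ne_empty.2 fun hU₀ => not_decisive_empty (hU₀ ▸ hU.prop)
  refine ⟨j, (hU.prop.diff_singleton_or_singleton hA hind hunan hj).resolve_left fun h => ?_⟩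
  have hUj : U \ {j} = U := hU.eq_of_le h Set.sdiff_subset
  exact Set.notMem_sdiff_of_mem (Set.mem_singleton j) (hUj.symm ▸ hj)

end SocialWelfare

/-- **Arrow's impossibility theorem.**  If `|A| ≥ 3`, every map
`f : L_A^m → L_A` satisfying IIA and PAR is the projection onto some
coordinate. -/
theorem arrow_impossibility
    {A : Type*} [Fintype A] (hA : 3 ≤ Fintype.card A) (m : ℕ)
    (f : (Fin m → LinPref A) → LinPref A)
    (hIIA : ∀ a b : A, a ≠ b →
      ∃ φ : (Fin m → LinPref (({a, b} : Set A))) → LinPref (({a, b} : Set A)),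
        ∀ p : Fin m → LinPref A,
          φ (fun i => restrictPref {a, b} (p i)) = restrictPref {a, b} (f p))
    (hPAR : ∀ p : LinPref A, f (fun _ => p) = p) :
    ∃ i₀ : Fin m, ∀ p : Fin m → LinPref A, f p = p i₀ := by
  have hind : IsIndependent f := isIndependent_of_iia hIIA
  have hunan : IsUnanimous f := isUnanimous_of_pareto hind hPAR
  obtain ⟨j, hj⟩ := exists_decisive_singleton hA hind hunan
  exact ⟨j, apply_eq_of_decisive_singleton hj⟩
end

section
/- Let 𝒜 be a central hyperplane arrangement in a finite-dimensional real vector space V. Then, up to order, there is a unique decomposition 𝒜 = 𝒜₁ ⊎ 𝒜₂ ⊎ ⋯ ⊎ 𝒜ₙ (i.e. 𝒜 is the disjoint union of the 𝒜ᵢ and r(𝒜) = r(𝒜₁) + ⋯ + r(𝒜ₙ)) in which every 𝒜ᵢ is indecomposable; moreover this decomposition coincides with the partition of 𝒜 into the connected components of the graph Γ(𝒜). -/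
open Set

section Arrangement

variable {V : Type*} [NormedAddCommGroup V] [NormedSpace ℝ V]

/-- A (linear) hyperplane: the kernel of a nonzero linear functional. -/
def IsHyperplane (H : Submodule ℝ V) : Prop :=
  ∃ f : V →ₗ[ℝ] ℝ, f ≠ 0 ∧ LinearMap.ker f = H

/-- A central hyperplane arrangement: a finite set of linear hyperplanes. -/
def IsCentralArrangement (𝒜 : Finset (Submodule ℝ V)) : Prop :=
  ∀ H ∈ 𝒜, IsHyperplane H

/-- The complement of the union of the hyperplanes of `𝒜`. -/
def arrComplement (𝒜 : Finset (Submodule ℝ V)) : Set V :=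
  {x | ∀ H ∈ 𝒜, x ∉ H}

/-- The set of chambers of `𝒜`: connected components of the complement. -/
def Chambers (𝒜 : Finset (Submodule ℝ V)) : Set (Set V) :=
  {c | ∃ x ∈ arrComplement 𝒜, c = connectedComponentIn (arrComplement 𝒜) x}

/-- A chamber of `𝒜`. -/
abbrev Chamber (𝒜 : Finset (Submodule ℝ V)) := ↥(Chambers 𝒜)

/-- A chosen point of a chamber. -/
noncomputable def Chamber.pt {𝒜 : Finset (Submodule ℝ V)} (c : Chamber 𝒜) : V :=
  c.2.choose

lemma Chamber.pt_mem {𝒜 : Finset (Submodule ℝ V)} (c : Chamber 𝒜) :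
    c.pt ∈ arrComplement 𝒜 := c.2.choose_spec.1

/-- `ε_H` : the chamber of the one-hyperplane arrangement `{H}` containing a
given chamber of `𝒜` (for `H ∈ 𝒜`). -/
noncomputable def epsC {𝒜 : Finset (Submodule ℝ V)} (H : Submodule ℝ V) (hH : H ∈ 𝒜)
    (c : Chamber 𝒜) : Chamber ({H} : Finset (Submodule ℝ V)) :=
  ⟨connectedComponentIn (arrComplement ({H} : Finset (Submodule ℝ V))) c.pt, by
    refine ⟨c.pt, ?_, rfl⟩
    intro H' hH'
    rw [Finset.mem_singleton] at hH'
    subst hH'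
    exact c.pt_mem _ hH⟩

/-- IIA for a map `Ch(𝒜)^m → Ch(𝒜)^l`. -/
def SatisfiesIIA {𝒜 : Finset (Submodule ℝ V)} {m l : ℕ}
    (Φ : (Fin m → Chamber 𝒜) → (Fin l → Chamber 𝒜)) : Prop :=
  ∀ (H : Submodule ℝ V) (hH : H ∈ 𝒜),
    ∃ φ : (Fin m → Chamber ({H} : Finset (Submodule ℝ V))) →
          (Fin l → Chamber ({H} : Finset (Submodule ℝ V))),
      ∀ c : Fin m → Chamber 𝒜,
        φ (fun i => epsC H hH (c i)) = fun j => epsC H hH (Φ c j)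

/-- IIA for a map `Ch(𝒜)^m → Ch(𝒜)`. -/
def SatisfiesIIA1 {𝒜 : Finset (Submodule ℝ V)} {m : ℕ}
    (Φ : (Fin m → Chamber 𝒜) → Chamber 𝒜) : Prop :=
  ∀ (H : Submodule ℝ V) (hH : H ∈ 𝒜),
    ∃ φ : (Fin m → Chamber ({H} : Finset (Submodule ℝ V))) →
          Chamber ({H} : Finset (Submodule ℝ V)),
      ∀ c : Fin m → Chamber 𝒜,
        φ (fun i => epsC H hH (c i)) = epsC H hH (Φ c)

/-- IIA for a map `Ch(𝒜) → Ch(𝒜)`. -/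
def SatisfiesIIAone {𝒜 : Finset (Submodule ℝ V)}
    (f : Chamber 𝒜 → Chamber 𝒜) : Prop :=
  ∀ (H : Submodule ℝ V) (hH : H ∈ 𝒜),
    ∃ φ : Chamber ({H} : Finset (Submodule ℝ V)) → Chamber ({H} : Finset (Submodule ℝ V)),
      ∀ c : Chamber 𝒜, φ (epsC H hH c) = epsC H hH (f c)

/-- Pareto property. -/
def SatisfiesPAR {𝒜 : Finset (Submodule ℝ V)} {m : ℕ}
    (Φ : (Fin m → Chamber 𝒜) → Chamber 𝒜) : Prop :=
  ∀ c : Chamber 𝒜, Φ (fun _ => c) = c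

/-- Admissible map: IIA and PAR. -/
def Admissible {𝒜 : Finset (Submodule ℝ V)} {m : ℕ}
    (Φ : (Fin m → Chamber 𝒜) → Chamber 𝒜) : Prop :=
  SatisfiesIIA1 Φ ∧ SatisfiesPAR Φ

/-- The rank `r(𝒜) = dim V − dim ⋂_{H ∈ 𝒜} H`. -/
noncomputable def arrRank (𝒜 : Finset (Submodule ℝ V)) : ℕ :=
  Module.finrank ℝ V - Module.finrank ℝ ↥(𝒜.inf id)

/-- Decomposability of a central arrangement. -/
def Decomposable (𝒜 : Finset (Submodule ℝ V)) : Prop :=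
  ∃ (n : ℕ) (parts : Fin n → Finset (Submodule ℝ V)),
    2 ≤ n ∧
    (∀ i, (parts i).Nonempty) ∧
    (∀ i j H, H ∈ parts i → H ∈ parts j → i = j) ∧
    (∀ H, H ∈ 𝒜 ↔ ∃ i, H ∈ parts i) ∧
    arrRank 𝒜 = ∑ i, arrRank (parts i)

/-- A dependent subarrangement: `r(ℬ) < |ℬ|`. -/
def Dependent (ℬ : Finset (Submodule ℝ V)) : Prop := arrRank ℬ < ℬ.card

/-- A circuit: a minimal dependent subarrangement. -/
def IsCircuit (ℬ : Finset (Submodule ℝ V)) : Prop :=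
  Dependent ℬ ∧ ∀ ℬ' ⊆ ℬ, Dependent ℬ' → ℬ' = ℬ

/-- The graph `Γ(𝒜)`: vertices are the hyperplanes of `𝒜`, with an edge between two
distinct hyperplanes iff some circuit of `𝒜` contains both. -/
def circuitGraph (𝒜 : Finset (Submodule ℝ V)) : SimpleGraph {H // H ∈ 𝒜} where
  Adj H H' := H ≠ H' ∧ ∃ ℬ ⊆ 𝒜, IsCircuit ℬ ∧ H.1 ∈ ℬ ∧ H'.1 ∈ ℬ
  symm := by
    constructor
    rintro a b ⟨hne, ℬ, hsub, hcirc, ha, hb⟩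
    exact ⟨hne.symm, ℬ, hsub, hcirc, hb, ha⟩
  loopless := by
    constructor
    rintro a ⟨h, -⟩
    exact h rfl

/-- `H` separates a set `T ⊆ Ch(𝒜)^m` if the image of `T` under `(ε_H)^m` has at
least two elements. -/
def SeparationOf {𝒜 : Finset (Submodule ℝ V)} {m : ℕ} (H : Submodule ℝ V) (hH : H ∈ 𝒜)
    (T : Set (Fin m → Chamber 𝒜)) : Prop :=
  ∃ t₁ ∈ T, ∃ t₂ ∈ T,
    (fun i => epsC H hH (t₁ i)) ≠ (fun i => epsC H hH (t₂ i))

end Arrangement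

/-- A decomposition of `𝒜` into pairwise disjoint nonempty indecomposable
subarrangements with additive rank. -/
def IsIndecomposableDecomposition
    {V : Type*} [NormedAddCommGroup V] [NormedSpace ℝ V]
    (𝒜 : Finset (Submodule ℝ V)) (n : ℕ)
    (parts : Fin n → Finset (Submodule ℝ V)) : Prop :=
  (∀ i, (parts i).Nonempty) ∧
  (∀ i j H, H ∈ parts i → H ∈ parts j → i = j) ∧
  (∀ H, H ∈ 𝒜 ↔ ∃ i, H ∈ parts i) ∧
  arrRank 𝒜 = ∑ i, arrRank (parts i) ∧
  (∀ i, ¬ Decomposable (parts i))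

/-!
Writing each hyperplane as the kernel of a functional, `r(ℬ)` is the dimension of the span of
the functionals of `ℬ`, so circuits are the minimal linearly dependent sets of functionals.
For disjoint `A` and `B`, `r(A ∪ B) = r(A) + r(B)` iff the spans of their functionals meet
trivially, iff no circuit meets both `A` and `B` (bases of the two spans are jointly dependent
exactly when the spans meet). Hence a partition of `𝒜` has additive rank iff each part is a union
of connected components of `Γ(𝒜)`. An indecomposable part is a single component, for otherwise
the hyperplanes reachable from one of its members split it off; and a component is
indecomposable, since the pieces of a decomposition would again be unions of components.
-/

open Module Submodule Finset

section IndexedPartition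

variable {α : Type*} {𝒜 : Finset α} {n : ℕ} {parts : Fin n → Finset α}

def IsIndexedPartition (𝒜 : Finset α) (parts : Fin n → Finset α) : Prop :=
  (∀ i, (parts i).Nonempty) ∧ (∀ i j a, a ∈ parts i → a ∈ parts j → i = j) ∧
    ∀ a, a ∈ 𝒜 ↔ ∃ i, a ∈ parts i

namespace IsIndexedPartition

lemma subset (hp : IsIndexedPartition 𝒜 parts) (i : Fin n) : parts i ⊆ 𝒜 :=
  fun a ha => (hp.2.2 a).2 ⟨i, ha⟩

lemma biUnion_eq [DecidableEq α] (hp : IsIndexedPartition 𝒜 parts) :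
    univ.biUnion parts = 𝒜 := by
  ext a
  simp [hp.2.2 a]

lemma pairwiseDisjoint (hp : IsIndexedPartition 𝒜 parts) :
    ((univ : Finset (Fin n)) : Set (Fin n)).PairwiseDisjoint parts :=
  fun i _ j _ hij => Finset.disjoint_left.2 fun a hi hj => hij (hp.2.1 i j a hi hj)

lemma exists_equiv {n' : ℕ} {parts' : Fin n' → Finset α} (hp : IsIndexedPartition 𝒜 parts)
    (hp' : IsIndexedPartition 𝒜 parts') (h : ∀ i, ∃ j, parts' j = parts i) :
    ∃ e : Fin n ≃ Fin n', ∀ i, parts' (e i) = parts i := by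
  choose g hg using h
  refine ⟨Equiv.ofBijective g ⟨fun i i' hii' => ?_, fun j => ?_⟩, hg⟩
  · obtain ⟨a, ha⟩ := hp.1 i
    exact hp.2.1 i i' a ha (by rw [← hg i', ← hii', hg i]; exact ha)
  · obtain ⟨a, ha⟩ := hp'.1 j
    obtain ⟨i, hi⟩ := (hp.2.2 a).1 (hp'.subset j ha)
    exact ⟨i, hp'.2.1 _ _ a (by rw [hg]; exact hi) ha⟩

end IsIndexedPartition

end IndexedPartition

lemma Finset.exists_subset_linearIndepOn_span_eq {ι K W : Type*} [DivisionRing K]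
    [AddCommGroup W] [Module K W] (f : ι → W) (A : Finset ι) :
    ∃ A' ⊆ A, LinearIndepOn K f (A' : Set ι) ∧ span K (f '' A') = span K (f '' A) := by
  classical
  obtain ⟨b, hbA, -, hspan, hli⟩ :=
    exists_linearIndepOn_extension (linearIndepOn_empty K f) (Set.empty_subset (A : Set ι))
  have hcoe : ((A.filter (· ∈ b) : Finset ι) : Set ι) = b := by
    ext x
    simpa using fun hx => hbA hx
  refine ⟨A.filter (· ∈ b), filter_subset _ _, ?_⟩
  rw [hcoe]
  exact ⟨hli, le_antisymm (span_mono (Set.image_mono hbA)) (span_le.2 hspan)⟩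

section Circuits

variable {V : Type*} [NormedAddCommGroup V] [NormedSpace ℝ V] {A B 𝒜 P : Finset (Submodule ℝ V)}

lemma IsCentralArrangement.mono (h : IsCentralArrangement B) (hAB : A ⊆ B) :
    IsCentralArrangement A :=
  fun H hH => h H (hAB hH)

lemma IsCentralArrangement.union [DecidableEq (Submodule ℝ V)] (hA : IsCentralArrangement A)
    (hB : IsCentralArrangement B) : IsCentralArrangement (A ∪ B) := by
  intro H hH
  rcases mem_union.1 hH with hH | hH
  exacts [hA H hH, hB H hH]

lemma IsCentralArrangement.biUnion {ι : Type*} [DecidableEq (Submodule ℝ V)] {s : Finset ι}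
    {P : ι → Finset (Submodule ℝ V)} (hP : ∀ i ∈ s, IsCentralArrangement (P i)) :
    IsCentralArrangement (s.biUnion P) := by
  intro H hH
  obtain ⟨i, hi, hHi⟩ := mem_biUnion.1 hH
  exact hP i hi H hHi

lemma IsCircuit.nonempty {C : Finset (Submodule ℝ V)} (hC : IsCircuit C) : C.Nonempty := by
  rw [Finset.nonempty_iff_ne_empty]
  rintro rfl
  exact Nat.not_lt_zero _ hC.1

lemma exists_isCircuit_subset_of_dependent {A : Finset (Submodule ℝ V)} (hA : Dependent A) :
    ∃ C ⊆ A, IsCircuit C := by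
  obtain ⟨C, hCA, hC⟩ := exists_minimal_le_of_wellFoundedLT Dependent A hA
  exact ⟨C, hCA, hC.1, fun C' hC'C hC' => le_antisymm hC'C (hC.2 hC' hC'C)⟩

/-- For `P ⊆ 𝒜`: `P` is a union of connected components of `Γ(𝒜)`. -/
def IsCircuitClosed (𝒜 P : Finset (Submodule ℝ V)) : Prop :=
  ∀ C ⊆ 𝒜, IsCircuit C → ∀ H ∈ C, H ∈ P → C ⊆ P

lemma IsCircuitClosed.trans {P Q : Finset (Submodule ℝ V)} (hQ : IsCircuitClosed P Q)
    (hP : IsCircuitClosed 𝒜 P) (hQP : Q ⊆ P) : IsCircuitClosed 𝒜 Q :=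
  fun C hC𝒜 hC H hHC hHQ => hQ C (hP C hC𝒜 hC H hHC (hQP hHQ)) hC H hHC hHQ

lemma IsCircuit.reachable {C : Finset (Submodule ℝ V)} (hC𝒜 : C ⊆ 𝒜) (hC : IsCircuit C)
    {H H' : Submodule ℝ V} (hH : H ∈ C) (hH' : H' ∈ C) :
    (circuitGraph 𝒜).Reachable ⟨H, hC𝒜 hH⟩ ⟨H', hC𝒜 hH'⟩ := by
  by_cases hHH' : H = H'
  · subst hHH'
    rfl
  · exact SimpleGraph.Adj.reachable ⟨fun h => hHH' (congrArg Subtype.val h), C, hC𝒜, hC, hH, hH'⟩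

lemma IsCircuitClosed.mem_of_reachable (hP : IsCircuitClosed 𝒜 P) {u v : {H // H ∈ 𝒜}}
    (huv : (circuitGraph 𝒜).Reachable u v) (hu : u.1 ∈ P) : v.1 ∈ P := by
  obtain ⟨p⟩ := huv
  induction p with
  | nil => exact hu
  | cons hadj _ ih =>
    obtain ⟨-, C, hC𝒜, hC, huC, hvC⟩ := hadj
    exact ih (hP C hC𝒜 hC _ huC hu hvC)

lemma decomposable_union {K D : Finset (Submodule ℝ V)} (hKD : Disjoint K D) (hK : K.Nonempty)
    (hD : D.Nonempty) (hrank : arrRank (K ∪ D) = arrRank K + arrRank D) :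
    Decomposable (K ∪ D) := by
  refine ⟨2, ![K, D], le_rfl, fun i => by fin_cases i <;> assumption, fun i j H hi hj => ?_,
    fun H => by simp [Fin.exists_fin_two], by simpa using hrank⟩
  fin_cases i <;> fin_cases j
  · rfl
  · exact absurd hj (Finset.disjoint_left.1 hKD hi)
  · exact absurd hi (Finset.disjoint_left.1 hKD hj)
  · rfl

end Circuits

section DualSpan

variable {V : Type*} [NormedAddCommGroup V] [NormedSpace ℝ V] {A B : Finset (Submodule ℝ V)}

open Classical in
noncomputable def definingFunctional (H : Submodule ℝ V) : Dual ℝ V :=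
  if h : IsHyperplane H then h.choose else 0

lemma IsHyperplane.ker_definingFunctional {H : Submodule ℝ V} (h : IsHyperplane H) :
    LinearMap.ker (definingFunctional H) = H := by
  rw [definingFunctional, dif_pos h]
  exact h.choose_spec.2

noncomputable def dualSpan (ℬ : Finset (Submodule ℝ V)) : Submodule ℝ (Dual ℝ V) :=
  span ℝ (definingFunctional '' ℬ)

lemma dualSpan_union [DecidableEq (Submodule ℝ V)] (A B : Finset (Submodule ℝ V)) :
    dualSpan (A ∪ B) = dualSpan A ⊔ dualSpan B := by
  rw [dualSpan, coe_union, Set.image_union, span_union]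
  rfl

lemma dualSpan_mono (hAB : A ⊆ B) : dualSpan A ≤ dualSpan B :=
  span_mono (Set.image_mono hAB)

lemma IsCentralArrangement.inf_eq_dualCoannihilator {ℬ : Finset (Submodule ℝ V)}
    (hℬ : IsCentralArrangement ℬ) : ℬ.inf id = (dualSpan ℬ).dualCoannihilator := by
  ext x
  rw [mem_finsetInf, ← SetLike.mem_coe, dualSpan, coe_dualCoannihilator_span]
  simp only [Set.mem_ofPred_eq, Set.forall_mem_image, SetLike.mem_coe, ← LinearMap.mem_ker]
  exact forall₂_congr fun H hH => by rw [(hℬ H hH).ker_definingFunctional]; rfl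

lemma arrRank_empty : arrRank (∅ : Finset (Submodule ℝ V)) = 0 := by
  rw [arrRank, inf_empty, finrank_top, Nat.sub_self]

variable [FiniteDimensional ℝ V]

lemma IsCentralArrangement.arrRank_eq_finrank_dualSpan {ℬ : Finset (Submodule ℝ V)}
    (hℬ : IsCentralArrangement ℬ) : arrRank ℬ = finrank ℝ (dualSpan ℬ) := by
  have := Subspace.finrank_add_finrank_dualCoannihilator_eq (dualSpan ℬ)
  rw [arrRank, hℬ.inf_eq_dualCoannihilator]
  omega

lemma IsCentralArrangement.dependent_iff {ℬ : Finset (Submodule ℝ V)}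
    (hℬ : IsCentralArrangement ℬ) :
    Dependent ℬ ↔ ¬ LinearIndepOn ℝ definingFunctional (ℬ : Set (Submodule ℝ V)) := by
  have hle := finrank_range_le_card (R := ℝ)
    (fun H : (ℬ : Set (Submodule ℝ V)) => definingFunctional H.1)
  rw [Dependent, hℬ.arrRank_eq_finrank_dualSpan, LinearIndepOn,
    linearIndependent_iff_card_eq_finrank_span]
  rw [← Set.image_eq_range] at hle ⊢
  simp only [Finset.coe_sort_coe, Fintype.card_coe] at hle ⊢
  change finrank ℝ (dualSpan ℬ) ≤ _ at hle
  change _ ↔ ¬ _ = finrank ℝ (dualSpan ℬ)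
  omega

variable [DecidableEq (Submodule ℝ V)]

lemma IsCircuit.linearIndepOn_inter {C P : Finset (Submodule ℝ V)} (hC : IsCircuit C)
    (hP : IsCentralArrangement P) (hCP : ¬ C ⊆ P) :
    LinearIndepOn ℝ definingFunctional (↑(C ∩ P) : Set (Submodule ℝ V)) := by
  by_contra hdep
  exact hCP (inter_eq_left.1 (hC.2 _ inter_subset_left
    ((hP.mono inter_subset_right).dependent_iff.2 hdep)))

lemma arrRank_union_add_finrank_inf (hA : IsCentralArrangement A)
    (hB : IsCentralArrangement B) :
    arrRank (A ∪ B) + finrank ℝ ↥(dualSpan A ⊓ dualSpan B) = arrRank A + arrRank B := by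
  rw [(hA.union hB).arrRank_eq_finrank_dualSpan, hA.arrRank_eq_finrank_dualSpan,
    hB.arrRank_eq_finrank_dualSpan, dualSpan_union]
  exact Submodule.finrank_sup_add_finrank_inf_eq _ _

lemma arrRank_union_le (hA : IsCentralArrangement A) (hB : IsCentralArrangement B) :
    arrRank (A ∪ B) ≤ arrRank A + arrRank B := by
  have := arrRank_union_add_finrank_inf hA hB
  omega

lemma arrRank_union_eq_add_iff_disjoint (hA : IsCentralArrangement A)
    (hB : IsCentralArrangement B) :
    arrRank (A ∪ B) = arrRank A + arrRank B ↔ Disjoint (dualSpan A) (dualSpan B) := by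
  have := arrRank_union_add_finrank_inf hA hB
  rw [disjoint_iff, ← Submodule.finrank_eq_zero]
  omega

lemma disjoint_dualSpan_iff_forall_isCircuit (hA : IsCentralArrangement A)
    (hB : IsCentralArrangement B) (hAB : Disjoint A B) :
    Disjoint (dualSpan A) (dualSpan B) ↔ ∀ C ⊆ A ∪ B, IsCircuit C → C ⊆ A ∨ C ⊆ B := by
  constructor
  · intro hspan C hCAB hC
    by_contra! hCA
    have hli := (hC.linearIndepOn_inter hA hCA.1).union (hC.linearIndepOn_inter hB hCA.2)
      (hspan.mono (dualSpan_mono inter_subset_right) (dualSpan_mono inter_subset_right))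
    rw [← coe_union, ← Finset.inter_union_distrib_left, Finset.inter_eq_left.2 hCAB] at hli
    exact ((hA.union hB).mono hCAB).dependent_iff.1 hC.1 hli
  · intro hsplit
    obtain ⟨A', hA'A, hA'li, hA'span⟩ :=
      exists_subset_linearIndepOn_span_eq (K := ℝ) definingFunctional A
    obtain ⟨B', hB'B, hB'li, hB'span⟩ :=
      exists_subset_linearIndepOn_span_eq (K := ℝ) definingFunctional B
    by_contra hspan
    have hdep : Dependent (A' ∪ B') := by
      refine ((hA.mono hA'A).union (hB.mono hB'B)).dependent_iff.2 fun hli => hspan ?_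
      rw [coe_union, linearIndepOn_union_iff (by simpa using hAB.mono hA'A hB'B)] at hli
      rw [dualSpan, dualSpan, ← hA'span, ← hB'span]
      exact hli.2.2
    obtain ⟨C, hCsub, hC⟩ := exists_isCircuit_subset_of_dependent hdep
    have hCdep := ((hA.mono hA'A).union (hB.mono hB'B)).mono hCsub |>.dependent_iff.1 hC.1
    rcases hsplit C (hCsub.trans (union_subset_union hA'A hB'B)) hC with hCA | hCB
    · refine hCdep (hA'li.mono fun H hH => ?_)
      rcases mem_union.1 (hCsub hH) with h | h
      exacts [h, absurd (hB'B h) (Finset.disjoint_left.1 hAB (hCA hH))]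
    · refine hCdep (hB'li.mono fun H hH => ?_)
      rcases mem_union.1 (hCsub hH) with h | h
      exacts [absurd (hA'A h) (Finset.disjoint_right.1 hAB (hCB hH)), h]

lemma arrRank_union_eq_add_iff (hA : IsCentralArrangement A) (hB : IsCentralArrangement B)
    (hAB : Disjoint A B) :
    arrRank (A ∪ B) = arrRank A + arrRank B ↔ ∀ C ⊆ A ∪ B, IsCircuit C → C ⊆ A ∨ C ⊆ B := by
  rw [arrRank_union_eq_add_iff_disjoint hA hB, disjoint_dualSpan_iff_forall_isCircuit hA hB hAB]

lemma arrRank_biUnion_le {ι : Type*} (s : Finset ι) {P : ι → Finset (Submodule ℝ V)}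
    (hP : ∀ i ∈ s, IsCentralArrangement (P i)) :
    arrRank (s.biUnion P) ≤ ∑ i ∈ s, arrRank (P i) := by
  classical
  induction s using Finset.induction_on with
  | empty => simp [arrRank_empty]
  | insert a s ha ih =>
    rw [Finset.biUnion_insert, sum_insert ha]
    have hs : ∀ i ∈ s, IsCentralArrangement (P i) := fun i hi => hP i (mem_insert_of_mem hi)
    exact (arrRank_union_le (hP a (mem_insert_self a s)) (.biUnion hs)).trans
      (Nat.add_le_add_left (ih hs) _)

lemma arrRank_biUnion_eq_sum_iff {ι : Type*} [DecidableEq ι] {s : Finset ι}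
    {P : ι → Finset (Submodule ℝ V)} (hP : ∀ i ∈ s, IsCentralArrangement (P i))
    (hdisj : (s : Set ι).PairwiseDisjoint P) :
    arrRank (s.biUnion P) = ∑ i ∈ s, arrRank (P i) ↔
      ∀ C ⊆ s.biUnion P, IsCircuit C → ∃ i ∈ s, C ⊆ P i := by
  induction s using Finset.induction_on with
  | empty =>
    refine iff_of_true arrRank_empty fun C hC hcirc => ?_
    obtain ⟨H, hH⟩ := hcirc.nonempty
    exact absurd (hC hH) (notMem_empty H)
  | insert a s ha ih =>
    have hPa := hP a (mem_insert_self a s)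
    have hs : ∀ i ∈ s, IsCentralArrangement (P i) := fun i hi => hP i (mem_insert_of_mem hi)
    have hdisj_a : Disjoint (P a) (s.biUnion P) :=
      (disjoint_biUnion_right _ _ _).2 fun i hi =>
        hdisj (mem_insert_self a s) (mem_insert_of_mem hi) (ne_of_mem_of_not_mem hi ha).symm
    have hsplit : arrRank (P a ∪ s.biUnion P) = arrRank (P a) + ∑ i ∈ s, arrRank (P i) ↔
        arrRank (P a ∪ s.biUnion P) = arrRank (P a) + arrRank (s.biUnion P) ∧
          arrRank (s.biUnion P) = ∑ i ∈ s, arrRank (P i) := by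
      have := arrRank_union_le hPa (.biUnion hs)
      have := arrRank_biUnion_le s hs
      omega
    rw [Finset.biUnion_insert, sum_insert ha, hsplit,
      arrRank_union_eq_add_iff hPa (.biUnion hs) hdisj_a, ih hs (hdisj.subset (by simp))]
    constructor
    · rintro ⟨hcirc_a, hcirc_s⟩ C hC hcirc
      rcases hcirc_a C hC hcirc with hCa | hCs
      · exact ⟨a, mem_insert_self a s, hCa⟩
      · obtain ⟨i, hi, hCi⟩ := hcirc_s C hCs hcirc
        exact ⟨i, mem_insert_of_mem hi, hCi⟩
    · intro hcirc_P
      refine ⟨fun C hC hcirc => ?_, fun C hC hcirc => ?_⟩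
      · obtain ⟨i, hi, hCi⟩ := hcirc_P C hC hcirc
        rcases mem_insert.1 hi with rfl | hi
        exacts [Or.inl hCi, Or.inr (hCi.trans (subset_biUnion_of_mem P hi))]
      · obtain ⟨i, hi, hCi⟩ := hcirc_P C (hC.trans subset_union_right) hcirc
        rcases mem_insert.1 hi with rfl | hi
        · obtain ⟨H, hH⟩ := hcirc.nonempty
          exact absurd (hC hH) (Finset.disjoint_left.1 hdisj_a (hCi hH))
        · exact ⟨i, hi, hCi⟩

end DualSpan

section Decomposition

variable {V : Type*} [NormedAddCommGroup V] [NormedSpace ℝ V] [FiniteDimensional ℝ V]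
  {𝒜 P : Finset (Submodule ℝ V)}

lemma IsIndexedPartition.arrRank_eq_sum_iff {n : ℕ} {parts : Fin n → Finset (Submodule ℝ V)}
    (h𝒜 : IsCentralArrangement 𝒜) (hp : IsIndexedPartition 𝒜 parts) :
    arrRank 𝒜 = ∑ i, arrRank (parts i) ↔ ∀ i, IsCircuitClosed 𝒜 (parts i) := by
  classical
  have hrank := arrRank_biUnion_eq_sum_iff (fun i _ => h𝒜.mono (hp.subset i)) hp.pairwiseDisjoint
  rw [hp.biUnion_eq] at hrank
  rw [hrank]
  constructor
  · intro h i C hC𝒜 hC H hHC hHi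
    obtain ⟨j, -, hCj⟩ := h C hC𝒜 hC
    rwa [hp.2.1 i j H hHi (hCj hHC)]
  · intro h C hC𝒜 hC
    obtain ⟨H, hHC⟩ := hC.nonempty
    obtain ⟨i, hHi⟩ := (hp.2.2 H).1 (hC𝒜 hHC)
    exact ⟨i, mem_univ i, h i C hC𝒜 hC H hHC hHi⟩

lemma reachable_of_not_decomposable (h𝒜 : IsCentralArrangement 𝒜) (hP𝒜 : P ⊆ 𝒜)
    (hP : ¬ Decomposable P) {H H' : Submodule ℝ V} (hH : H ∈ P) (hH' : H' ∈ P) :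
    (circuitGraph 𝒜).Reachable ⟨H, hP𝒜 hH⟩ ⟨H', hP𝒜 hH'⟩ := by
  classical
  by_contra hHH'
  set K := P.filter fun G => ∃ hG : G ∈ 𝒜, (circuitGraph 𝒜).Reachable ⟨H, hP𝒜 hH⟩ ⟨G, hG⟩
  set D := P.filter fun G => ¬ ∃ hG : G ∈ 𝒜, (circuitGraph 𝒜).Reachable ⟨H, hP𝒜 hH⟩ ⟨G, hG⟩
  have hKD : K ∪ D = P := filter_union_filter_not_eq _ P
  have hdisj : Disjoint K D := disjoint_filter_filter_not P P _
  have hcirc : ∀ C ⊆ K ∪ D, IsCircuit C → C ⊆ K ∨ C ⊆ D := by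
    intro C hC hcirc
    rw [hKD] at hC
    by_cases hmeet : ∃ G ∈ C, G ∈ K
    · obtain ⟨G, hGC, hGK⟩ := hmeet
      obtain ⟨-, _, hHG⟩ := mem_filter.1 hGK
      exact Or.inl fun G' hG'C =>
        mem_filter.2 ⟨hC hG'C, _, hHG.trans (hcirc.reachable (hC.trans hP𝒜) hGC hG'C)⟩
    · exact Or.inr fun G hGC =>
        mem_filter.2 ⟨hC hGC, fun h => hmeet ⟨G, hGC, mem_filter.2 ⟨hC hGC, h⟩⟩⟩
  have hK : IsCentralArrangement K := h𝒜.mono ((filter_subset _ _).trans hP𝒜)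
  have hD : IsCentralArrangement D := h𝒜.mono ((filter_subset _ _).trans hP𝒜)
  apply hP
  rw [← hKD]
  exact decomposable_union hdisj ⟨H, mem_filter.2 ⟨hH, _, .rfl⟩⟩
    ⟨H', mem_filter.2 ⟨hH', fun ⟨_, h⟩ => hHH' h⟩⟩ ((arrRank_union_eq_add_iff hK hD hdisj).2 hcirc)

lemma not_decomposable_of_reachable (h𝒜 : IsCentralArrangement 𝒜) (hP𝒜 : P ⊆ 𝒜)
    (hPc : IsCircuitClosed 𝒜 P)
    (hreach : ∀ H (hH : H ∈ P) H' (hH' : H' ∈ P),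
      (circuitGraph 𝒜).Reachable ⟨H, hP𝒜 hH⟩ ⟨H', hP𝒜 hH'⟩) :
    ¬ Decomposable P := by
  rintro ⟨m, q, hm, hq_ne, hq_disj, hq_cover, hrank⟩
  have hq : IsIndexedPartition P q := ⟨hq_ne, hq_disj, hq_cover⟩
  have hclosed (j : Fin m) : IsCircuitClosed 𝒜 (q j) :=
    (((hq.arrRank_eq_sum_iff (h𝒜.mono hP𝒜)).1 hrank) j).trans hPc (hq.subset j)
  obtain ⟨H₀, hH₀⟩ := hq_ne ⟨0, by omega⟩
  obtain ⟨H₁, hH₁⟩ := hq_ne ⟨1, by omega⟩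
  have hH₁₀ := (hclosed _).mem_of_reachable
    (hreach H₀ (hq.subset _ hH₀) H₁ (hq.subset _ hH₁)) hH₀
  exact absurd (hq_disj _ _ _ hH₁₀ hH₁) (by simp [Fin.ext_iff])

end Decomposition

section Components

variable {V : Type*} [NormedAddCommGroup V] [NormedSpace ℝ V] {𝒜 : Finset (Submodule ℝ V)}

open Classical in
noncomputable def componentPart (𝒜 : Finset (Submodule ℝ V))
    (c : (circuitGraph 𝒜).ConnectedComponent) : Finset (Submodule ℝ V) :=
  𝒜.filter fun H => ∃ hH : H ∈ 𝒜, (circuitGraph 𝒜).connectedComponentMk ⟨H, hH⟩ = c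

lemma mem_componentPart {c : (circuitGraph 𝒜).ConnectedComponent} {H : Submodule ℝ V} :
    H ∈ componentPart 𝒜 c ↔ ∃ hH : H ∈ 𝒜, (circuitGraph 𝒜).connectedComponentMk ⟨H, hH⟩ = c := by
  simp [componentPart]

lemma componentPart_subset (c : (circuitGraph 𝒜).ConnectedComponent) :
    componentPart 𝒜 c ⊆ 𝒜 := by
  classical
  exact filter_subset _ _

lemma isCircuitClosed_componentPart (c : (circuitGraph 𝒜).ConnectedComponent) :
    IsCircuitClosed 𝒜 (componentPart 𝒜 c) := by
  intro C hC𝒜 hC H hHC hHc G hGC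
  obtain ⟨-, rfl⟩ := mem_componentPart.1 hHc
  exact mem_componentPart.2
    ⟨_, (SimpleGraph.ConnectedComponent.eq.2 (hC.reachable hC𝒜 hHC hGC)).symm⟩

lemma reachable_of_mem_componentPart {c : (circuitGraph 𝒜).ConnectedComponent}
    {H H' : Submodule ℝ V} (hH : H ∈ componentPart 𝒜 c) (hH' : H' ∈ componentPart 𝒜 c) :
    (circuitGraph 𝒜).Reachable ⟨H, componentPart_subset c hH⟩ ⟨H', componentPart_subset c hH'⟩ := by
  obtain ⟨_, hHc⟩ := mem_componentPart.1 hH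
  obtain ⟨_, hH'c⟩ := mem_componentPart.1 hH'
  exact SimpleGraph.ConnectedComponent.eq.1 (hHc.trans hH'c.symm)

lemma isIndexedPartition_componentPart {n : ℕ}
    (e : (circuitGraph 𝒜).ConnectedComponent ≃ Fin n) :
    IsIndexedPartition 𝒜 fun i => componentPart 𝒜 (e.symm i) := by
  refine ⟨fun i => ?_, fun i j H hi hj => ?_,
    fun H => ⟨fun hH => ?_, fun ⟨i, hi⟩ => componentPart_subset _ hi⟩⟩
  · obtain ⟨v, hv⟩ := (e.symm i).exists_rep
    exact ⟨v.1, mem_componentPart.2 ⟨v.2, hv⟩⟩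
  · obtain ⟨_, hHi⟩ := mem_componentPart.1 hi
    obtain ⟨_, hHj⟩ := mem_componentPart.1 hj
    exact e.symm.injective (hHi.symm.trans hHj)
  · exact ⟨e ((circuitGraph 𝒜).connectedComponentMk ⟨H, hH⟩),
      mem_componentPart.2 ⟨hH, (e.symm_apply_apply _).symm⟩⟩

lemma exists_isIndecomposableDecomposition [FiniteDimensional ℝ V]
    (h𝒜 : IsCentralArrangement 𝒜) :
    ∃ (n : ℕ) (parts : Fin n → Finset (Submodule ℝ V)),
      IsIndecomposableDecomposition 𝒜 n parts := by
  classical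
  have hp := isIndexedPartition_componentPart
    (Fintype.equivFin (circuitGraph 𝒜).ConnectedComponent)
  exact ⟨_, _, hp.1, hp.2.1, hp.2.2,
    (hp.arrRank_eq_sum_iff h𝒜).2 fun _ => isCircuitClosed_componentPart _,
    fun _ => not_decomposable_of_reachable h𝒜 (componentPart_subset _)
      (isCircuitClosed_componentPart _) fun _ hH _ hH' => reachable_of_mem_componentPart hH hH'⟩

end Components

namespace IsIndecomposableDecomposition

variable {V : Type*} [NormedAddCommGroup V] [NormedSpace ℝ V] {𝒜 : Finset (Submodule ℝ V)}
  {n : ℕ} {parts : Fin n → Finset (Submodule ℝ V)}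

lemma isIndexedPartition (hdec : IsIndecomposableDecomposition 𝒜 n parts) :
    IsIndexedPartition 𝒜 parts :=
  ⟨hdec.1, hdec.2.1, hdec.2.2.1⟩

variable [FiniteDimensional ℝ V]

lemma mem_iff_reachable (h𝒜 : IsCentralArrangement 𝒜)
    (hdec : IsIndecomposableDecomposition 𝒜 n parts) {i : Fin n} {H H' : Submodule ℝ V}
    (hH : H ∈ 𝒜) (hH' : H' ∈ 𝒜) (hHi : H ∈ parts i) :
    H' ∈ parts i ↔ (circuitGraph 𝒜).Reachable ⟨H, hH⟩ ⟨H', hH'⟩ :=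
  ⟨fun hH'i => reachable_of_not_decomposable h𝒜 (hdec.isIndexedPartition.subset i)
      (hdec.2.2.2.2 i) hHi hH'i,
    fun hr => ((hdec.isIndexedPartition.arrRank_eq_sum_iff h𝒜).1 hdec.2.2.2.1 i).mem_of_reachable
      hr hHi⟩

lemma exists_equiv (h𝒜 : IsCentralArrangement 𝒜) {n' : ℕ}
    {parts' : Fin n' → Finset (Submodule ℝ V)} (hdec : IsIndecomposableDecomposition 𝒜 n parts)
    (hdec' : IsIndecomposableDecomposition 𝒜 n' parts') :
    ∃ e : Fin n ≃ Fin n', ∀ i, parts' (e i) = parts i := by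
  refine hdec.isIndexedPartition.exists_equiv hdec'.isIndexedPartition fun i => ?_
  obtain ⟨H, hHi⟩ := hdec.1 i
  have hH := hdec.isIndexedPartition.subset i hHi
  obtain ⟨j, hHj⟩ := (hdec'.2.2.1 H).1 hH
  refine ⟨j, Finset.ext fun H' => ?_⟩
  by_cases hH' : H' ∈ 𝒜
  · rw [hdec'.mem_iff_reachable h𝒜 hH hH' hHj, hdec.mem_iff_reachable h𝒜 hH hH' hHi]
  · exact iff_of_false (fun h => hH' (hdec'.isIndexedPartition.subset j h))
      fun h => hH' (hdec.isIndexedPartition.subset i h)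

end IsIndecomposableDecomposition

/-- Every central arrangement has a decomposition into indecomposable
subarrangements, unique up to order, and it coincides with the partition of `𝒜`
into the connected components of the graph `Γ(𝒜)`. -/
theorem unique_decomposition_into_indecomposables
    {V : Type*} [NormedAddCommGroup V] [NormedSpace ℝ V] [FiniteDimensional ℝ V]
    (𝒜 : Finset (Submodule ℝ V)) (h𝒜 : IsCentralArrangement 𝒜) :
    (∃ (n : ℕ) (parts : Fin n → Finset (Submodule ℝ V)),
        IsIndecomposableDecomposition 𝒜 n parts) ∧
    (∀ (n n' : ℕ) (parts : Fin n → Finset (Submodule ℝ V))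
        (parts' : Fin n' → Finset (Submodule ℝ V)),
        IsIndecomposableDecomposition 𝒜 n parts →
        IsIndecomposableDecomposition 𝒜 n' parts' →
        ∃ e : Fin n ≃ Fin n', ∀ i, parts' (e i) = parts i) ∧
    (∀ (n : ℕ) (parts : Fin n → Finset (Submodule ℝ V)),
        IsIndecomposableDecomposition 𝒜 n parts →
        ∀ (i : Fin n) (H H' : Submodule ℝ V) (hH : H ∈ 𝒜) (hH' : H' ∈ 𝒜),
          H ∈ parts i →
            (H' ∈ parts i ↔ (circuitGraph 𝒜).Reachable ⟨H, hH⟩ ⟨H', hH'⟩)) :=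
  ⟨exists_isIndecomposableDecomposition h𝒜,
    fun _ _ _ _ hdec hdec' => hdec.exists_equiv h𝒜 hdec',
    fun _ _ hdec _ _ _ hH hH' hHi => hdec.mem_iff_reachable h𝒜 hH hH' hHi⟩
end

section
/- Let n ≥ 3 be a natural number and let 𝒜 = {ker(xᵢ − xⱼ) | 1 ≤ i < j ≤ n} be the braid arrangement in ℝⁿ. Then 𝒜 is indecomposable. -/
/-!
The rank of a central arrangement is the dimension of the span of its normals, so rank
additivity of a decomposition makes the normal spans of the parts independent. Independence
forces two nonzero normals whose sum is again a nonzero normal into the same part (otherwise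
some nonzero vector lies in two independent summands). In the braid arrangement
`(xₐ - x_b) + (x_b - x_c) = xₐ - x_c`, so hyperplanes sharing an index lie in the same part, and
any two hyperplanes are linked through at most one intermediate one: a single part contains
them all, contradicting the existence of two nonempty parts.
-/

open Set

namespace Submodule

variable {ι K M : Type*} [DivisionRing K] [AddCommGroup M] [Module K M] [FiniteDimensional K M]

theorem finrank_finset_sup_le_sum [DecidableEq ι] (W : ι → Submodule K M) (s : Finset ι) :
    Module.finrank K ↥(s.sup W) ≤ ∑ i ∈ s, Module.finrank K ↥(W i) := by
  induction s using Finset.induction with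
  | empty => simp
  | insert a s ha ih =>
    rw [Finset.sup_insert, Finset.sum_insert ha]
    have := finrank_sup_add_finrank_inf_eq (W a) (s.sup W)
    omega

theorem iSupIndep_of_finrank_iSup_eq_sum [Fintype ι] (W : ι → Submodule K M)
    (h : Module.finrank K ↥(⨆ i, W i) = ∑ i, Module.finrank K ↥(W i)) : iSupIndep W := by
  classical
  rw [iSupIndep_iff_supIndep_univ, Finset.supIndep_iff_disjoint_erase]
  intro i hi
  have hsup : W i ⊔ (Finset.univ.erase i).sup W = ⨆ j, W j := by
    rw [← Finset.sup_insert, Finset.insert_erase hi, Finset.sup_univ_eq_iSup]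
  have hsum := Finset.add_sum_erase Finset.univ (fun j => Module.finrank K ↥(W j)) hi
  have hle := finrank_finset_sup_le_sum W (Finset.univ.erase i)
  have hmod := finrank_sup_add_finrank_inf_eq (W i) ((Finset.univ.erase i).sup W)
  rw [hsup, h] at hmod
  rw [disjoint_iff, ← finrank_eq_zero]
  omega

end Submodule

theorem iSupIndep.eq_of_add_mem {ι R M : Type*} [Ring R] [AddCommGroup M] [Module R M]
    {W : ι → Submodule R M} (hW : iSupIndep W) {f g : M} (hf : f ≠ 0) (hg : g ≠ 0)
    (hfg : f + g ≠ 0) {i j l : ι} (hfi : f ∈ W i) (hgj : g ∈ W j) (hfgl : f + g ∈ W l) :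
    i = j := by
  by_contra hij
  by_cases hli : l = i
  · subst hli
    have hgl : g ∈ W l := by simpa using sub_mem hfgl hfi
    exact hg ((Submodule.disjoint_def.mp (hW.pairwiseDisjoint hij)) g hgl hgj)
  by_cases hlj : l = j
  · subst hlj
    have hfl : f ∈ W l := by simpa using sub_mem hfgl hgj
    exact hf ((Submodule.disjoint_def.mp (hW.pairwiseDisjoint hij)) f hfi hfl)
  have hmem : f + g ∈ ⨆ m ∈ ({i, j} : Set ι), W m := by
    rw [iSup_pair]
    exact add_mem (Submodule.mem_sup_left hfi) (Submodule.mem_sup_right hgj)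
  have hl : l ∉ ({i, j} : Set ι) := by simp [hli, hlj]
  exact hfg ((Submodule.disjoint_def.mp (hW.disjoint_biSup hl)) _ hfgl hmem)

section NormalSpan

variable {V : Type*} [NormedAddCommGroup V] [NormedSpace ℝ V]

noncomputable def normalSpan (ℬ : Finset (Submodule ℝ V)) : Submodule ℝ (Module.Dual ℝ V) :=
  Submodule.span ℝ {f | f ≠ 0 ∧ LinearMap.ker f ∈ ℬ}

theorem mem_normalSpan {ℬ : Finset (Submodule ℝ V)} {f : Module.Dual ℝ V} (hf : f ≠ 0)
    (hker : LinearMap.ker f ∈ ℬ) : f ∈ normalSpan ℬ :=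
  Submodule.subset_span ⟨hf, hker⟩

theorem dualCoannihilator_normalSpan {ℬ : Finset (Submodule ℝ V)}
    (hℬ : IsCentralArrangement ℬ) : (normalSpan ℬ).dualCoannihilator = ℬ.inf id := by
  ext x
  rw [Submodule.mem_dualCoannihilator, Submodule.mem_finsetInf]
  constructor
  · intro hx H hH
    obtain ⟨f, hf, rfl⟩ := hℬ H hH
    exact hx f (mem_normalSpan hf hH)
  · intro hx f hf
    have hle : normalSpan ℬ ≤ LinearMap.ker (Module.Dual.eval ℝ V x) := by
      rw [normalSpan, Submodule.span_le]
      rintro g ⟨-, hg⟩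
      exact hx _ hg
    exact hle hf

theorem arrRank_eq_finrank_normalSpan [FiniteDimensional ℝ V] {ℬ : Finset (Submodule ℝ V)}
    (hℬ : IsCentralArrangement ℬ) : arrRank ℬ = Module.finrank ℝ ↥(normalSpan ℬ) := by
  have h := Subspace.finrank_add_finrank_dualCoannihilator_eq (normalSpan ℬ)
  rw [dualCoannihilator_normalSpan hℬ] at h
  unfold arrRank
  omega

theorem normalSpan_eq_iSup {ι : Type*} {𝒜 : Finset (Submodule ℝ V)}
    (parts : ι → Finset (Submodule ℝ V)) (hcover : ∀ H, H ∈ 𝒜 ↔ ∃ i, H ∈ parts i) :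
    normalSpan 𝒜 = ⨆ i, normalSpan (parts i) := by
  simp only [normalSpan, ← Submodule.span_iUnion]
  congr 1
  ext f
  simp only [Set.mem_iUnion, Set.mem_ofPred_eq, hcover, exists_and_left]

theorem iSupIndep_normalSpan_of_arrRank_eq_sum [FiniteDimensional ℝ V]
    {𝒜 : Finset (Submodule ℝ V)} (h𝒜 : IsCentralArrangement 𝒜) {k : ℕ}
    (parts : Fin k → Finset (Submodule ℝ V)) (hcover : ∀ H, H ∈ 𝒜 ↔ ∃ i, H ∈ parts i)
    (hrank : arrRank 𝒜 = ∑ i, arrRank (parts i)) :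
    iSupIndep fun i => normalSpan (parts i) := by
  have hparts : ∀ i, IsCentralArrangement (parts i) := fun i H hH =>
    h𝒜 H ((hcover H).mpr ⟨i, hH⟩)
  apply Submodule.iSupIndep_of_finrank_iSup_eq_sum
  rw [← normalSpan_eq_iSup parts hcover, ← arrRank_eq_finrank_normalSpan h𝒜, hrank]
  exact Finset.sum_congr rfl fun i _ => arrRank_eq_finrank_normalSpan (hparts i)

end NormalSpan

section Braid

variable {n : ℕ}

def braidNormal (a b : Fin n) : Module.Dual ℝ (Fin n → ℝ) :=
  (LinearMap.proj a : (Fin n → ℝ) →ₗ[ℝ] ℝ) - LinearMap.proj b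

open Classical in
noncomputable def braidArrangement (n : ℕ) : Finset (Submodule ℝ (Fin n → ℝ)) :=
  Finset.image (fun p : Fin n × Fin n => LinearMap.ker (braidNormal p.1 p.2))
    (Finset.univ.filter fun p : Fin n × Fin n => p.1 < p.2)

theorem braidNormal_ne_zero {a b : Fin n} (hab : a ≠ b) : braidNormal a b ≠ 0 := by
  intro h
  have := LinearMap.congr_fun h (Pi.single a 1)
  simp [braidNormal, hab.symm] at this

theorem braidNormal_add_braidNormal (a b c : Fin n) :
    braidNormal a b + braidNormal b c = braidNormal a c := by
  simp only [braidNormal, sub_add_sub_cancel]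

theorem ker_braidNormal_comm (a b : Fin n) :
    LinearMap.ker (braidNormal a b) = LinearMap.ker (braidNormal b a) := by
  ext x
  simp only [LinearMap.mem_ker, braidNormal, LinearMap.sub_apply, sub_eq_zero]
  exact eq_comm

theorem mem_braidArrangement {H : Submodule ℝ (Fin n → ℝ)} :
    H ∈ braidArrangement n ↔ ∃ a b, a ≠ b ∧ LinearMap.ker (braidNormal a b) = H := by
  simp only [braidArrangement, Finset.mem_image, Finset.mem_filter, Finset.mem_univ, true_and,
    Prod.exists]
  constructor
  · rintro ⟨a, b, hab, rfl⟩
    exact ⟨a, b, hab.ne, rfl⟩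
  · rintro ⟨a, b, hab, rfl⟩
    rcases hab.lt_or_gt with hlt | hgt
    · exact ⟨a, b, hlt, rfl⟩
    · exact ⟨b, a, hgt, ker_braidNormal_comm b a⟩

theorem isCentralArrangement_braidArrangement : IsCentralArrangement (braidArrangement n) := by
  intro H hH
  obtain ⟨a, b, hab, rfl⟩ := mem_braidArrangement.mp hH
  exact ⟨_, braidNormal_ne_zero hab, rfl⟩

variable {k : ℕ} {parts : Fin k → Finset (Submodule ℝ (Fin n → ℝ))}

theorem eq_of_ker_braidNormal_mem_of_common_vertex
    (hindep : iSupIndep fun i => normalSpan (parts i))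
    (hdisj : ∀ i j H, H ∈ parts i → H ∈ parts j → i = j)
    (hcover : ∀ H, H ∈ braidArrangement n ↔ ∃ i, H ∈ parts i)
    {a b c : Fin n} (hab : a ≠ b) (hac : a ≠ c) {i j : Fin k}
    (hi : LinearMap.ker (braidNormal a b) ∈ parts i)
    (hj : LinearMap.ker (braidNormal a c) ∈ parts j) : i = j := by
  by_cases hbc : b = c
  · subst hbc
    exact hdisj i j _ hi hj
  obtain ⟨l, hl⟩ := (hcover _).mp (mem_braidArrangement.mpr ⟨b, c, hbc, rfl⟩)
  rw [ker_braidNormal_comm] at hi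
  rw [← braidNormal_add_braidNormal b a c] at hl
  have hf := braidNormal_ne_zero hab.symm
  have hg := braidNormal_ne_zero hac
  have hfg : braidNormal b a + braidNormal a c ≠ 0 :=
    braidNormal_add_braidNormal b a c ▸ braidNormal_ne_zero hbc
  exact hindep.eq_of_add_mem hf hg hfg (mem_normalSpan hf hi) (mem_normalSpan hg hj)
    (mem_normalSpan hfg hl)

theorem eq_of_ker_braidNormal_mem
    (hindep : iSupIndep fun i => normalSpan (parts i))
    (hdisj : ∀ i j H, H ∈ parts i → H ∈ parts j → i = j)
    (hcover : ∀ H, H ∈ braidArrangement n ↔ ∃ i, H ∈ parts i)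
    {a b c d : Fin n} (hab : a ≠ b) (hcd : c ≠ d) {i j : Fin k}
    (hi : LinearMap.ker (braidNormal a b) ∈ parts i)
    (hj : LinearMap.ker (braidNormal c d) ∈ parts j) : i = j := by
  rw [ker_braidNormal_comm] at hi
  by_cases hbc : b = c
  · subst hbc
    exact eq_of_ker_braidNormal_mem_of_common_vertex hindep hdisj hcover hab.symm hcd hi hj
  obtain ⟨l, hl⟩ := (hcover _).mp (mem_braidArrangement.mpr ⟨b, c, hbc, rfl⟩)
  have hil := eq_of_ker_braidNormal_mem_of_common_vertex hindep hdisj hcover hab.symm hbc hi hl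
  rw [ker_braidNormal_comm] at hl
  exact hil.trans
    (eq_of_ker_braidNormal_mem_of_common_vertex hindep hdisj hcover (Ne.symm hbc) hcd hl hj)

theorem eq_of_mem_parts_braidArrangement
    (hindep : iSupIndep fun i => normalSpan (parts i))
    (hdisj : ∀ i j H, H ∈ parts i → H ∈ parts j → i = j)
    (hcover : ∀ H, H ∈ braidArrangement n ↔ ∃ i, H ∈ parts i)
    {i j : Fin k} {H H' : Submodule ℝ (Fin n → ℝ)} (hH : H ∈ parts i) (hH' : H' ∈ parts j) :
    i = j := by
  obtain ⟨a, b, hab, rfl⟩ := mem_braidArrangement.mp ((hcover H).mpr ⟨i, hH⟩)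
  obtain ⟨c, d, hcd, rfl⟩ := mem_braidArrangement.mp ((hcover H').mpr ⟨j, hH'⟩)
  exact eq_of_ker_braidNormal_mem hindep hdisj hcover hab hcd hH hH'

end Braid

open Classical in
theorem braid_arrangement_indecomposable_general (n : ℕ) :
    ¬ Decomposable (Finset.image
        (fun p : Fin n × Fin n =>
          LinearMap.ker ((LinearMap.proj p.1 : (Fin n → ℝ) →ₗ[ℝ] ℝ)
            - (LinearMap.proj p.2 : (Fin n → ℝ) →ₗ[ℝ] ℝ)))
        (Finset.univ.filter fun p : Fin n × Fin n => p.1 < p.2)) := by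
  show ¬ Decomposable (braidArrangement n)
  rintro ⟨k, parts, hk, hne, hdisj, hcover, hrank⟩
  have hindep := iSupIndep_normalSpan_of_arrRank_eq_sum isCentralArrangement_braidArrangement
    parts hcover hrank
  obtain ⟨H₀, hH₀⟩ := hne ⟨0, by omega⟩
  obtain ⟨H₁, hH₁⟩ := hne ⟨1, by omega⟩
  have h01 := eq_of_mem_parts_braidArrangement hindep hdisj hcover hH₀ hH₁
  simp at h01

open Classical in
/-- The braid arrangement `{ker (xᵢ - xⱼ) | 1 ≤ i < j ≤ n}` in `ℝⁿ` (`n ≥ 3`) is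
indecomposable. -/
theorem braid_arrangement_indecomposable (n : ℕ) (hn : 3 ≤ n) :
    ¬ Decomposable (Finset.image
        (fun p : Fin n × Fin n =>
          LinearMap.ker ((LinearMap.proj p.1 : (Fin n → ℝ) →ₗ[ℝ] ℝ)
            - (LinearMap.proj p.2 : (Fin n → ℝ) →ₗ[ℝ] ℝ)))
        (Finset.univ.filter fun p : Fin n × Fin n => p.1 < p.2)) :=
  braid_arrangement_indecomposable_general n
end

section
/- Let 𝒜 = {H₁, …, Hₙ} be a central hyperplane arrangement in a finite-dimensional real vector space V, let m be a natural number, and let (i₁,…,iₙ) ∈ {1,…,m}ⁿ. Then the codimension in V^m of π_{i₁}^{−1}(H₁) ∩ ⋯ ∩ π_{iₙ}^{−1}(Hₙ) equals r(𝒜) if and only if the map s : 𝒜 → {1,…,m} defined by s(H_k) = i_k is constant on each connected component of the graph Γ(𝒜); equivalently, if and only if 𝒜 = ⨄_{j=1}^{m} s^{−1}(j), i.e. r(𝒜) = ∑_{j=1}^{m} r(s^{−1}(j)). -/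
open Set

/-!
Choose linear forms `f H` with `ker (f H) = H` and let `U j` be the span of the forms of colour
`j`. The intersection is the product of the `⋂_{s H = j} H`, so its codimension is
`∑ j, dim (U j)`, while `r(𝒜) = dim (⨆ j, U j)`; hence equality holds iff the `U j` are
independent. Circuits of `𝒜` are the minimal linearly dependent sets of forms. If the `U j` are
independent, splitting a circuit by colour would write it as the union of two proper, hence
independent, subsets with disjoint spans, so circuits are monochromatic. Conversely, if circuits
are monochromatic, a union of bases of the `U j` chosen among the forms contains no circuit, so it
is independent and so are the `U j`.
-/

open Module Submodule

theorem iInf_comap_proj_eq_pi_iInf_fiber {R M ι κ : Type*} [Semiring R] [AddCommMonoid M]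
    [Module R M] (s : ι → κ) (L : ι → Submodule R M) :
    ⨅ i, comap (LinearMap.proj (s i) : (κ → M) →ₗ[R] M) (L i) =
      Submodule.pi univ fun j => ⨅ i, ⨅ (_ : s i = j), L i := by
  ext x
  simp only [Submodule.mem_iInf, mem_comap, LinearMap.proj_apply, Submodule.mem_pi, Set.mem_univ,
    true_implies]
  exact ⟨fun h j i hij => hij ▸ h i, fun h i => h (s i) i rfl⟩

section FiniteDimensional

variable {K V : Type*} [Field K] [AddCommGroup V] [Module K V] [FiniteDimensional K V]

theorem finrank_sub_finrank_pi {κ : Type*} [Fintype κ] (W : κ → Submodule K V) :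
    finrank K (κ → V) - finrank K ↥(Submodule.pi univ W) =
      ∑ j, (finrank K V - finrank K ↥(W j)) := by
  classical
  rw [← Submodule.finrank_quotient, (quotientPi W).finrank_eq, finrank_pi_fintype]
  simp only [Submodule.finrank_quotient]

theorem iSupIndep_iff_finrank_iSup_eq_sum {κ : Type*} [Fintype κ] (U : κ → Submodule K V) :
    iSupIndep U ↔ finrank K ↥(⨆ j, U j) = ∑ j, finrank K (U j) := by
  classical
  have hdom : finrank K (Π₀ j, U j) = ∑ j, finrank K (U j) := finrank_directSum K fun j => U j
  have := (DFinsupp.lsum ℕ fun j => (U j).subtype).finrank_range_add_finrank_ker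
  rw [iSupIndep_iff_dfinsupp_lsum_injective, iSup_eq_range_dfinsupp_lsum, ← hdom,
    ← LinearMap.ker_eq_bot, ← Submodule.finrank_eq_zero]
  omega

theorem finrank_sub_finrank_biInf_ker {ι : Type*} (f : ι → V →ₗ[K] K) (T : Set ι) :
    finrank K V - finrank K ↥(⨅ i ∈ T, LinearMap.ker (f i)) = finrank K ↥(span K (f '' T)) := by
  have hann : (span K (f '' T)).dualCoannihilator = ⨅ i ∈ T, LinearMap.ker (f i) := by
    ext x
    rw [← SetLike.mem_coe, coe_dualCoannihilator_span]
    simp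
  rw [← hann]
  exact Nat.sub_eq_of_eq_add (Subspace.finrank_add_finrank_dualCoannihilator_eq _).symm

end FiniteDimensional

section Circuit

open Function

variable (K : Type*) {W ι κ : Type*} [DivisionRing K] [AddCommGroup W] [Module K W]

def IsLinearCircuit (f : ι → W) (C : Finset ι) : Prop :=
  Minimal (fun T : Finset ι => ¬ LinearIndepOn K f ↑T) C

variable {K} {f : ι → W} {C : Finset ι}

theorem exists_isLinearCircuit_subset {T : Finset ι} (hT : ¬ LinearIndepOn K f ↑T) :
    ∃ C ⊆ T, IsLinearCircuit K f C :=
  exists_minimal_le_of_wellFoundedLT _ T hT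

theorem IsLinearCircuit.nonempty (hC : IsLinearCircuit K f C) : C.Nonempty := by
  rw [Finset.nonempty_iff_ne_empty]
  rintro rfl
  exact hC.prop (by simp)

theorem IsLinearCircuit.linearIndepOn_of_ssubset (hC : IsLinearCircuit K f C) {T : Finset ι}
    (hT : T ⊂ C) : LinearIndepOn K f ↑T :=
  not_not.1 (hC.not_prop_of_lt hT)

theorem LinearIndepOn.iSupIndep_span_image {B : κ → Set ι} (hB : LinearIndepOn K f (⋃ j, B j))
    (hdisj : Pairwise (Disjoint on B)) : iSupIndep fun j => span K (f '' B j) := by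
  intro k
  have hsup : ⨆ j, ⨆ (_ : j ≠ k), span K (f '' B j) = span K (f '' ⋃ j, ⋃ (_ : j ≠ k), B j) := by
    simp only [Set.image_iUnion, Submodule.span_iUnion]
  have hd : Disjoint (B k) (⋃ j, ⋃ (_ : j ≠ k), B j) := by
    simp only [Set.disjoint_iUnion_right]
    exact fun j hj => hdisj hj.symm
  rw [hsup]
  exact ((linearIndepOn_union_iff hd).1 (hB.mono (Set.union_subset (Set.subset_iUnion B k)
    (Set.iUnion₂_subset fun j _ => Set.subset_iUnion B j)))).2.2

variable {s : ι → κ}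

theorem iSup_span_image_fiber :
    ⨆ j, span K (f '' (s ⁻¹' {j})) = span K (Set.range f) := by
  rw [← Submodule.span_iUnion, ← Set.image_iUnion, ← Set.preimage_iUnion,
    Set.iUnion_of_singleton, Set.preimage_univ, Set.image_univ]

theorem IsLinearCircuit.eq_of_iSupIndep (hU : iSupIndep fun j => span K (f '' (s ⁻¹' {j})))
    (hC : IsLinearCircuit K f C) {i i' : ι} (hi : i ∈ C) (hi' : i' ∈ C) : s i = s i' := by
  classical
  by_contra hne
  set A := C.filter fun k => s k = s i
  set B := C.filter fun k => s k ≠ s i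
  have hA : LinearIndepOn K f ↑A :=
    hC.linearIndepOn_of_ssubset (Finset.filter_ssubset.2 ⟨i', hi', Ne.symm hne⟩)
  have hB : LinearIndepOn K f ↑B :=
    hC.linearIndepOn_of_ssubset (Finset.filter_ssubset.2 ⟨i, hi, by simp⟩)
  have hAB : Disjoint (span K (f '' ↑A)) (span K (f '' ↑B)) := by
    refine (hU (s i)).mono (span_mono (Set.image_mono fun k hk => ?_)) (span_le.2 ?_)
    · exact (Finset.mem_filter.1 hk).2
    · rintro _ ⟨k, hk, rfl⟩
      have hk' := Finset.mem_filter.1 hk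
      exact mem_iSup_of_mem (s k) (mem_iSup_of_mem hk'.2 (subset_span ⟨k, rfl, rfl⟩))
  apply hC.prop
  rw [← Finset.filter_union_filter_not_eq (fun k => s k = s i) C, Finset.coe_union]
  exact hA.union hB hAB

theorem iSupIndep_span_image_fiber_of_forall_isLinearCircuit
    (h : ∀ C, IsLinearCircuit K f C → ∀ i ∈ C, ∀ i' ∈ C, s i = s i') :
    iSupIndep fun j => span K (f '' (s ⁻¹' {j})) := by
  choose B hBsub _ hBspan hBind using fun j =>
    exists_linearIndepOn_extension (linearIndepOn_empty K f) (Set.empty_subset (s ⁻¹' {j}))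
  have hspan : ∀ j, span K (f '' B j) = span K (f '' (s ⁻¹' {j})) := fun j =>
    le_antisymm (span_mono (Set.image_mono (hBsub j))) (span_le.2 (hBspan j))
  have hdisj : Pairwise (Disjoint on B) := fun j j' hjj' =>
    ((Set.disjoint_singleton.2 hjj').preimage s).mono (hBsub j) (hBsub j')
  have hind : LinearIndepOn K f (⋃ j, B j) := by
    rw [linearIndepOn_iff_linearIndepOn_finset]
    intro T hT
    by_contra hdep
    obtain ⟨C, hCT, hC⟩ := exists_isLinearCircuit_subset hdep
    obtain ⟨i, hi⟩ := hC.nonempty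
    refine hC.prop ((hBind (s i)).mono fun k hk => ?_)
    obtain ⟨j, hkj⟩ := Set.mem_iUnion.1 (hT (hCT hk))
    rwa [← h C hC k hk i hi, hBsub j hkj]
  simpa only [hspan] using hind.iSupIndep_span_image hdisj

theorem iSupIndep_span_image_fiber_iff :
    (iSupIndep fun j => span K (f '' (s ⁻¹' {j}))) ↔
      ∀ C, IsLinearCircuit K f C → ∀ i ∈ C, ∀ i' ∈ C, s i = s i' :=
  ⟨fun hU _ hC _ hi _ hi' => hC.eq_of_iSupIndep hU hi hi',
    iSupIndep_span_image_fiber_of_forall_isLinearCircuit⟩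

end Circuit

theorem SimpleGraph.forall_reachable_imp_eq_iff {V α : Type*} (G : SimpleGraph V) (g : V → α) :
    (∀ v w, G.Reachable v w → g v = g w) ↔ ∀ v w, G.Adj v w → g v = g w := by
  refine ⟨fun h v w hvw => h v w hvw.reachable, fun h v w hvw => ?_⟩
  obtain ⟨p⟩ := hvw
  induction p with
  | nil => rfl
  | cons hvw _ ih => exact (h _ _ hvw).trans ih

section HyperplaneArrangement

variable {V : Type*} [NormedAddCommGroup V] [NormedSpace ℝ V] {𝒜 : Finset (Submodule ℝ V)}
  {f : 𝒜 → V →ₗ[ℝ] ℝ}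

theorem inf_map_subtype_eq_biInf_ker (hf : ∀ H, LinearMap.ker (f H) = H) (T : Finset 𝒜) :
    (T.map (Function.Embedding.subtype _)).inf id = ⨅ H ∈ T, LinearMap.ker (f H) := by
  rw [Finset.inf_map, Finset.inf_eq_iInf]
  simp only [Function.comp_apply, id_eq, Function.Embedding.coe_subtype, hf]

variable [FiniteDimensional ℝ V]

theorem arrRank_map_subtype (hf : ∀ H, LinearMap.ker (f H) = H) (T : Finset 𝒜) :
    arrRank (T.map (Function.Embedding.subtype _)) = finrank ℝ ↥(span ℝ (f '' ↑T)) := by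
  rw [arrRank, inf_map_subtype_eq_biInf_ker hf]
  exact finrank_sub_finrank_biInf_ker f ↑T

theorem dependent_map_subtype_iff (hf : ∀ H, LinearMap.ker (f H) = H) (T : Finset 𝒜) :
    Dependent (T.map (Function.Embedding.subtype _)) ↔ ¬ LinearIndepOn ℝ f ↑T := by
  rw [Dependent, arrRank_map_subtype hf, Finset.card_map, LinearIndepOn,
    linearIndependent_iff_card_le_finrank_span, not_le, Set.finrank, ← Set.image_eq_range]
  simp only [Finset.coe_sort_coe, Fintype.card_coe]

theorem isCircuit_map_subtype_iff (hf : ∀ H, LinearMap.ker (f H) = H) (T : Finset 𝒜) :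
    IsCircuit (T.map (Function.Embedding.subtype _)) ↔ IsLinearCircuit ℝ f T := by
  simp only [IsCircuit, IsLinearCircuit, Minimal, dependent_map_subtype_iff hf]
  refine and_congr_right fun _ => ⟨fun hmin T' hT' hle => ?_, fun hmin ℬ hℬ hdep => ?_⟩
  · exact (Finset.map_inj.1 (hmin _ (Finset.map_subset_map.2 hle)
      ((dependent_map_subtype_iff hf T').2 hT'))).ge
  · obtain ⟨T', hT', rfl⟩ := Finset.subset_map_iff.1 hℬ
    exact congrArg _ (le_antisymm hT' (hmin ((dependent_map_subtype_iff hf T').1 hdep) hT'))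

theorem circuitGraph_adj_iff (hf : ∀ H, LinearMap.ker (f H) = H) (H H' : 𝒜) :
    (circuitGraph 𝒜).Adj H H' ↔ H ≠ H' ∧ ∃ C, IsLinearCircuit ℝ f C ∧ H ∈ C ∧ H' ∈ C := by
  classical
  refine and_congr_right fun _ => ⟨fun ⟨ℬ, hℬ, hC, hH, hH'⟩ => ?_, fun ⟨C, hC, hH, hH'⟩ => ?_⟩
  · rw [← Finset.subtype_map_of_mem hℬ, isCircuit_map_subtype_iff hf] at hC
    exact ⟨_, hC, by simpa using hH, by simpa using hH'⟩
  · exact ⟨_, Finset.map_subtype_subset C, (isCircuit_map_subtype_iff hf C).2 hC,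
      Finset.mem_map_of_mem _ hH, Finset.mem_map_of_mem _ hH'⟩

theorem forall_reachable_circuitGraph_imp_eq_iff (hf : ∀ H, LinearMap.ker (f H) = H)
    {κ : Type*} (s : 𝒜 → κ) :
    (∀ H H', (circuitGraph 𝒜).Reachable H H' → s H = s H') ↔
      ∀ C, IsLinearCircuit ℝ f C → ∀ H ∈ C, ∀ H' ∈ C, s H = s H' := by
  simp only [SimpleGraph.forall_reachable_imp_eq_iff, circuitGraph_adj_iff hf]
  refine ⟨fun h C hC H hH H' hH' => ?_, fun h H H' ⟨_, C, hC, hH, hH'⟩ => h C hC H hH H' hH'⟩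
  rcases eq_or_ne H H' with rfl | hne
  · rfl
  · exact h H H' ⟨hne, C, hC, hH, hH'⟩

end HyperplaneArrangement

/-- For an assignment `s : 𝒜 → {1,…,m}`, the codimension in `V^m` of
`⋂_{H ∈ 𝒜} π_{s(H)}⁻¹(H)` equals `r(𝒜)` if and only if `s` is constant on each
connected component of the graph `Γ(𝒜)`, if and only if
`r(𝒜) = ∑_{j=1}^m r(s⁻¹(j))`. -/
theorem codim_eq_rank_iff
    {V : Type*} [NormedAddCommGroup V] [NormedSpace ℝ V] [FiniteDimensional ℝ V]
    (𝒜 : Finset (Submodule ℝ V)) (h𝒜 : IsCentralArrangement 𝒜) (m : ℕ)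
    (s : {H // H ∈ 𝒜} → Fin m) :
    ((Module.finrank ℝ (Fin m → V) -
        Module.finrank ℝ
          ↥(⨅ H : {H // H ∈ 𝒜},
              Submodule.comap (LinearMap.proj (s H) : (Fin m → V) →ₗ[ℝ] V) H.1)
        = arrRank 𝒜)
      ↔ ∀ H H' : {H // H ∈ 𝒜}, (circuitGraph 𝒜).Reachable H H' → s H = s H') ∧
    ((Module.finrank ℝ (Fin m → V) -
        Module.finrank ℝ
          ↥(⨅ H : {H // H ∈ 𝒜},
              Submodule.comap (LinearMap.proj (s H) : (Fin m → V) →ₗ[ℝ] V) H.1)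
        = arrRank 𝒜)
      ↔ arrRank 𝒜 =
          ∑ j : Fin m,
            (Module.finrank ℝ V -
              Module.finrank ℝ ↥(⨅ (H : {H // H ∈ 𝒜}) (_ : s H = j), H.1))) := by
  choose f _ hf using fun H : 𝒜 => h𝒜 H H.2
  have hfiber (j : Fin m) : finrank ℝ V - finrank ℝ ↥(⨅ (H : 𝒜) (_ : s H = j), H.1) =
      finrank ℝ ↥(span ℝ (f '' (s ⁻¹' {j}))) := by
    have hW : ⨅ (H : 𝒜) (_ : s H = j), H.1 = ⨅ H ∈ s ⁻¹' {j}, LinearMap.ker (f H) := by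
      simp [hf]
    rw [hW, finrank_sub_finrank_biInf_ker]
  have hrank : arrRank 𝒜 = finrank ℝ ↥(⨆ j, span ℝ (f '' (s ⁻¹' {j}))) := by
    rw [iSup_span_image_fiber, ← Set.image_univ, ← Finset.coe_univ, ← arrRank_map_subtype hf,
      Finset.univ_eq_attach, Finset.attach_map_val]
  rw [iInf_comap_proj_eq_pi_iInf_fiber, finrank_sub_finrank_pi]
  refine ⟨?_, eq_comm⟩
  rw [Finset.sum_congr rfl fun j _ => hfiber j, hrank, eq_comm,
    ← iSupIndep_iff_finrank_iSup_eq_sum, iSupIndep_span_image_fiber_iff,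
    forall_reachable_circuitGraph_imp_eq_iff hf]
end

section
/- Let 𝒜 be a central hyperplane arrangement in a finite-dimensional real vector space V, let m, l be natural numbers, and let f : Ch(𝒜)^m → Ch(𝒜)^l be a map satisfying IIA. If T ⊆ Ch(𝒜)^m is a subset such that some H ∈ 𝒜 does not separate T, then some H′ ∈ 𝒜 does not separate the image f(T) ⊆ Ch(𝒜)^l. Consequently f induces a simplicial map from the simplicial complex M_m(𝒜) to M_l(𝒜). -/
open Set

theorem SatisfiesIIA.separationOf_of_separationOf_image
    {V : Type*} [NormedAddCommGroup V] [NormedSpace ℝ V] {𝒜 : Finset (Submodule ℝ V)}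
    {m l : ℕ} {f : (Fin m → Chamber 𝒜) → (Fin l → Chamber 𝒜)} (hf : SatisfiesIIA f)
    {H : Submodule ℝ V} (hH : H ∈ 𝒜) {T : Set (Fin m → Chamber 𝒜)}
    (hsep : SeparationOf H hH (f '' T)) : SeparationOf H hH T := by
  obtain ⟨_, ⟨t₁, ht₁, rfl⟩, _, ⟨t₂, ht₂, rfl⟩, hne⟩ := hsep
  obtain ⟨φ, hφ⟩ := hf H hH
  refine ⟨t₁, ht₁, t₂, ht₂, fun heq => hne ?_⟩
  rw [← hφ t₁, ← hφ t₂, heq]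

theorem IIA_induces_simplicial_map_general
    {V : Type*} [NormedAddCommGroup V] [NormedSpace ℝ V]
    (𝒜 : Finset (Submodule ℝ V)) (m l : ℕ)
    (f : (Fin m → Chamber 𝒜) → (Fin l → Chamber 𝒜)) (hf : SatisfiesIIA f)
    (T : Set (Fin m → Chamber 𝒜))
    (hT : ∃ (H : Submodule ℝ V) (hH : H ∈ 𝒜), ¬ SeparationOf H hH T) :
    ∃ (H' : Submodule ℝ V) (hH' : H' ∈ 𝒜), ¬ SeparationOf H' hH' (f '' T) := by
  obtain ⟨H, hH, hsep⟩ := hT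
  exact ⟨H, hH, mt (hf.separationOf_of_separationOf_image hH) hsep⟩

/-- A map `f : Ch(𝒜)^m → Ch(𝒜)^l` satisfying IIA maps simplices of `M_m(𝒜)` to
simplices of `M_l(𝒜)`: if some `H ∈ 𝒜` does not separate `T`, then some
`H' ∈ 𝒜` does not separate the image `f(T)`.  Consequently `f` induces a
simplicial map `M_m(𝒜) → M_l(𝒜)`. -/
theorem IIA_induces_simplicial_map
    {V : Type*} [NormedAddCommGroup V] [NormedSpace ℝ V] [FiniteDimensional ℝ V]
    (𝒜 : Finset (Submodule ℝ V)) (h𝒜 : IsCentralArrangement 𝒜) (m l : ℕ)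
    (f : (Fin m → Chamber 𝒜) → (Fin l → Chamber 𝒜)) (hf : SatisfiesIIA f)
    (T : Set (Fin m → Chamber 𝒜))
    (hT : ∃ (H : Submodule ℝ V) (hH : H ∈ 𝒜), ¬ SeparationOf H hH T) :
    ∃ (H' : Submodule ℝ V) (hH' : H' ∈ 𝒜), ¬ SeparationOf H' hH' (f '' T) :=
  IIA_induces_simplicial_map_general 𝒜 m l f hf T hT
end

section
/- Let 𝒜 be a central hyperplane arrangement in a finite-dimensional real vector space V and let f : Ch(𝒜) → Ch(𝒜) be a map satisfying IIA, with associated maps φ_H : Ch({H}) → Ch({H}) for H ∈ 𝒜. Then f is bijective if and only if for every H ∈ 𝒜 the map φ_H is either the identity of Ch({H}) or the transposition exchanging the two elements of Ch({H}). -/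
open Set

/-!
A chamber of `𝒜` is convex, hence determined by the side of each `H ∈ 𝒜` on which it lies, that
is, by its images under the maps `ε_H`; and `Ch({H})` consists of the two open half-spaces of `H`.
So `Ch(𝒜)` embeds into a finite product, and each `ε_H` is onto because the complement of `𝒜` is
dense. If `f` is bijective, `φ_H ∘ ε_H = ε_H ∘ f` is onto, so `φ_H` is a permutation of a set
with two elements. Conversely, if every `φ_H` is injective, chambers with the same image under
`f` have the same images under every `ε_H`, so `f` is injective, hence bijective.
-/

theorem Function.Injective.eq_id_or_forall_ne_of_card_le_two {α : Type*} [Finite α]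
    (hα : Nat.card α ≤ 2) {φ : α → α} (hφ : φ.Injective) : φ = id ∨ ∀ a, φ a ≠ a := by
  by_contra! h
  obtain ⟨⟨b, hb⟩, a, ha⟩ := And.imp_left Function.ne_iff.mp h
  have : Fintype α := Fintype.ofFinite α
  refine absurd (Fintype.two_lt_card_iff.mpr ⟨a, b, φ b, ?_, ?_, hb.symm⟩) ?_
  · rintro rfl
    exact hb ha
  · intro hab
    obtain rfl := hφ (ha.trans hab)
    exact hb ha
  · rwa [← Nat.card_eq_fintype_card, not_lt]

theorem segment_subset_compl_ker_iff {E : Type*} [AddCommGroup E] [Module ℝ E]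
    (g : E →ₗ[ℝ] ℝ) (x y : E) :
    segment ℝ x y ⊆ (LinearMap.ker g : Set E)ᶜ ↔ (0 : ℝ) ∉ uIcc (g x) (g y) := by
  have himage : g '' segment ℝ x y = segment ℝ (g x) (g y) := image_segment ℝ g.toAffineMap x y
  rw [← segment_eq_uIcc, ← himage]
  simp [subset_def]

section Chambers

variable {V : Type*} [NormedAddCommGroup V] [NormedSpace ℝ V] {𝒜 : Finset (Submodule ℝ V)}

theorem arrComplement_eq_biInter (𝒜 : Finset (Submodule ℝ V)) :
    arrComplement 𝒜 = ⋂ H ∈ 𝒜, (H : Set V)ᶜ := by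
  ext
  simp [arrComplement]

theorem arrComplement_singleton (H : Submodule ℝ V) :
    arrComplement ({H} : Finset (Submodule ℝ V)) = (H : Set V)ᶜ := by
  simp [arrComplement_eq_biInter]

theorem arrComplement_anti {ℬ : Finset (Submodule ℝ V)} (h : 𝒜 ⊆ ℬ) :
    arrComplement ℬ ⊆ arrComplement 𝒜 :=
  fun _ hx H hH => hx H (h hH)

theorem isOpen_arrComplement [FiniteDimensional ℝ V] (𝒜 : Finset (Submodule ℝ V)) :
    IsOpen (arrComplement 𝒜) := by
  rw [arrComplement_eq_biInter]
  exact isOpen_biInter_finset fun H _ => H.closed_of_finiteDimensional.isOpen_compl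

theorem IsHyperplane.dense_compl [FiniteDimensional ℝ V] {H : Submodule ℝ V}
    (hH : IsHyperplane H) : Dense (H : Set V)ᶜ := by
  obtain ⟨g, hg, rfl⟩ := hH
  rw [← interior_eq_empty_iff_dense_compl, ← not_nonempty_iff_eq_empty]
  exact fun hint =>
    hg (LinearMap.ker_eq_top.mp ((LinearMap.ker g).eq_top_of_nonempty_interior' hint))

theorem IsCentralArrangement.dense_arrComplement [FiniteDimensional ℝ V]
    (h𝒜 : IsCentralArrangement 𝒜) : Dense (arrComplement 𝒜) := by
  rw [arrComplement_eq_biInter]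
  exact dense_biInter_of_isOpen (fun H _ => H.closed_of_finiteDimensional.isOpen_compl)
    𝒜.countable_toSet fun H hH => (h𝒜 H hH).dense_compl

theorem mem_connectedComponentIn_arrComplement_iff [FiniteDimensional ℝ V]
    (h𝒜 : IsCentralArrangement 𝒜) {x y : V} (hx : x ∈ arrComplement 𝒜) :
    y ∈ connectedComponentIn (arrComplement 𝒜) x ↔ segment ℝ x y ⊆ arrComplement 𝒜 := by
  refine ⟨fun hy => ?_, fun hseg => (convex_segment x y).isPreconnected.subset_connectedComponentIn
    (left_mem_segment ℝ x y) hseg (right_mem_segment ℝ x y)⟩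
  rw [arrComplement_eq_biInter, subset_iInter₂_iff]
  intro H hH
  obtain ⟨g, -, rfl⟩ := h𝒜 _ hH
  set C := connectedComponentIn (arrComplement 𝒜) x
  have hC : IsPreconnected (g '' C) :=
    isPreconnected_connectedComponentIn.image g g.continuous_of_finiteDimensional.continuousOn
  have hzero : (0 : ℝ) ∉ g '' C := by
    rintro ⟨z, hz, hgz⟩
    exact connectedComponentIn_subset _ _ hz _ hH hgz
  rw [segment_subset_compl_ker_iff]
  exact fun h0 => hzero (hC.ordConnected.uIcc_subset
    (mem_image_of_mem g (mem_connectedComponentIn hx)) (mem_image_of_mem g hy) h0)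

theorem Chamber.coe_eq (c : Chamber 𝒜) :
    (c : Set V) = connectedComponentIn (arrComplement 𝒜) c.pt :=
  c.2.choose_spec.2

theorem Chamber.pt_mem_coe (c : Chamber 𝒜) : c.pt ∈ (c : Set V) :=
  c.coe_eq ▸ mem_connectedComponentIn c.pt_mem

theorem Chamber.isOpen [FiniteDimensional ℝ V] (c : Chamber 𝒜) : IsOpen (c : Set V) :=
  c.coe_eq ▸ (isOpen_arrComplement 𝒜).connectedComponentIn

theorem Chamber.eq_of_mem {c c' : Chamber 𝒜} {x : V} (hx : x ∈ (c : Set V))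
    (hx' : x ∈ (c' : Set V)) : c = c' := by
  rw [Chamber.coe_eq] at hx hx'
  exact Subtype.ext (by rw [c.coe_eq, c'.coe_eq, connectedComponentIn_eq hx,
    connectedComponentIn_eq hx'])

theorem Chamber.eq_iff_mem {c c' : Chamber 𝒜} {x : V} (hx' : x ∈ (c' : Set V)) :
    c = c' ↔ x ∈ (c : Set V) :=
  ⟨fun h => h ▸ hx', fun hx => Chamber.eq_of_mem hx hx'⟩

theorem Chamber.eq_iff_segment_subset [FiniteDimensional ℝ V] (h𝒜 : IsCentralArrangement 𝒜)
    {c c' : Chamber 𝒜} : c = c' ↔ segment ℝ c.pt c'.pt ⊆ arrComplement 𝒜 := by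
  rw [Chamber.eq_iff_mem c'.pt_mem_coe, c.coe_eq,
    mem_connectedComponentIn_arrComplement_iff h𝒜 c.pt_mem]

theorem coe_subset_epsC {H : Submodule ℝ V} (hH : H ∈ 𝒜) (c : Chamber 𝒜) :
    (c : Set V) ⊆ epsC H hH c := by
  rw [c.coe_eq]
  exact connectedComponentIn_mono _ (arrComplement_anti (Finset.singleton_subset_iff.mpr hH))

theorem epsC_eq_of_mem {H : Submodule ℝ V} (hH : H ∈ 𝒜) {c : Chamber 𝒜}
    {d : Chamber ({H} : Finset (Submodule ℝ V))} {x : V} (hxc : x ∈ (c : Set V))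
    (hxd : x ∈ (d : Set V)) : epsC H hH c = d :=
  Chamber.eq_of_mem (coe_subset_epsC hH c hxc) hxd

theorem epsC_eq_epsC_iff [FiniteDimensional ℝ V] {H : Submodule ℝ V} (hH' : IsHyperplane H)
    (hH : H ∈ 𝒜) (c c' : Chamber 𝒜) :
    epsC H hH c = epsC H hH c' ↔ segment ℝ c.pt c'.pt ⊆ (H : Set V)ᶜ := by
  have h𝒜 : IsCentralArrangement ({H} : Finset (Submodule ℝ V)) := by simpa [IsCentralArrangement]
  rw [Chamber.eq_iff_mem (coe_subset_epsC hH c' c'.pt_mem_coe), ← arrComplement_singleton]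
  exact mem_connectedComponentIn_arrComplement_iff h𝒜
    (arrComplement_anti (Finset.singleton_subset_iff.mpr hH) c.pt_mem)

theorem Chamber.eq_of_forall_epsC_eq [FiniteDimensional ℝ V] (h𝒜 : IsCentralArrangement 𝒜)
    {c c' : Chamber 𝒜} (h : ∀ H (hH : H ∈ 𝒜), epsC H hH c = epsC H hH c') : c = c' := by
  rw [Chamber.eq_iff_segment_subset h𝒜, arrComplement_eq_biInter, subset_iInter₂_iff]
  exact fun H hH => (epsC_eq_epsC_iff (h𝒜 H hH) hH c c').mp (h H hH)

theorem epsC_surjective [FiniteDimensional ℝ V] (h𝒜 : IsCentralArrangement 𝒜)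
    {H : Submodule ℝ V} (hH : H ∈ 𝒜) : Function.Surjective (epsC H hH) := by
  intro d
  obtain ⟨x, hxd, hx⟩ :=
    h𝒜.dense_arrComplement.inter_open_nonempty _ d.isOpen ⟨d.pt, d.pt_mem_coe⟩
  exact ⟨⟨_, x, hx, rfl⟩, epsC_eq_of_mem hH (mem_connectedComponentIn hx) hxd⟩

theorem injective_pos_apply_pt [FiniteDimensional ℝ V] {g : V →ₗ[ℝ] ℝ} (hg : g ≠ 0) :
    Function.Injective fun d : Chamber ({LinearMap.ker g} : Finset (Submodule ℝ V)) =>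
      0 < g d.pt := by
  have h𝒜 : IsCentralArrangement ({LinearMap.ker g} : Finset (Submodule ℝ V)) := by
    simpa [IsCentralArrangement] using ⟨g, hg, rfl⟩
  have hne (d : Chamber ({LinearMap.ker g} : Finset (Submodule ℝ V))) : g d.pt ≠ 0 :=
    d.pt_mem _ (Finset.mem_singleton_self _)
  intro d d' (hdd' : (0 < g d.pt) = (0 < g d'.pt))
  rw [Chamber.eq_iff_segment_subset h𝒜, arrComplement_singleton, segment_subset_compl_ker_iff,
    mem_uIcc]
  rcases (hne d).lt_or_gt with h | h <;> rcases (hne d').lt_or_gt with h' | h' <;>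
    simp_all

theorem IsHyperplane.finite_chamber [FiniteDimensional ℝ V] {H : Submodule ℝ V}
    (hH : IsHyperplane H) : Finite (Chamber ({H} : Finset (Submodule ℝ V))) := by
  obtain ⟨g, hg, rfl⟩ := hH
  exact Finite.of_injective _ (injective_pos_apply_pt hg)

theorem IsHyperplane.card_chamber_le_two [FiniteDimensional ℝ V] {H : Submodule ℝ V}
    (hH : IsHyperplane H) : Nat.card (Chamber ({H} : Finset (Submodule ℝ V))) ≤ 2 := by
  obtain ⟨g, hg, rfl⟩ := hH
  simpa using Nat.card_le_card_of_injective _ (injective_pos_apply_pt hg)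

theorem IsCentralArrangement.finite_chamber [FiniteDimensional ℝ V]
    (h𝒜 : IsCentralArrangement 𝒜) : Finite (Chamber 𝒜) := by
  have (H : 𝒜) : Finite (Chamber ({H.1} : Finset (Submodule ℝ V))) :=
    (h𝒜 H H.2).finite_chamber
  exact Finite.of_injective (fun c (H : 𝒜) => epsC H.1 H.2 c) fun c c' h =>
    Chamber.eq_of_forall_epsC_eq h𝒜 fun H hH => congrFun h ⟨H, hH⟩

end Chambers

/-- A map `f : Ch(𝒜) → Ch(𝒜)` satisfying IIA is bijective if and only if, for
every `H ∈ 𝒜`, any associated map `φ_H : Ch({H}) → Ch({H})` is either the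
identity or the transposition exchanging the two elements of `Ch({H})`. -/
theorem bijective_iff_components_id_or_transposition
    {V : Type*} [NormedAddCommGroup V] [NormedSpace ℝ V] [FiniteDimensional ℝ V]
    (𝒜 : Finset (Submodule ℝ V)) (h𝒜 : IsCentralArrangement 𝒜)
    (f : Chamber 𝒜 → Chamber 𝒜) (hf : SatisfiesIIAone f) :
    Function.Bijective f ↔
      ∀ (H : Submodule ℝ V) (hH : H ∈ 𝒜)
        (φ : Chamber ({H} : Finset (Submodule ℝ V)) →
             Chamber ({H} : Finset (Submodule ℝ V))),
        (∀ c : Chamber 𝒜, φ (epsC H hH c) = epsC H hH (f c)) →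
        (φ = id ∨ (Function.Bijective φ ∧ ∀ d, φ d ≠ d)) := by
  have := h𝒜.finite_chamber
  constructor
  · intro hbij H hH φ hφ
    have := (h𝒜 H hH).finite_chamber
    have hsurj : φ.Surjective := by
      refine Function.Surjective.of_comp (g := epsC H hH) ?_
      rw [show φ ∘ epsC H hH = epsC H hH ∘ f from funext hφ]
      exact (epsC_surjective h𝒜 hH).comp hbij.2
    have hbijφ : φ.Bijective := ⟨Finite.injective_iff_surjective.mpr hsurj, hsurj⟩
    exact (hbijφ.1.eq_id_or_forall_ne_of_card_le_two (h𝒜 H hH).card_chamber_le_two).imp_right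
      (⟨hbijφ, ·⟩)
  · intro hcomponents
    refine Finite.injective_iff_bijective.mp fun c c' hcc' =>
      Chamber.eq_of_forall_epsC_eq h𝒜 fun H hH => ?_
    obtain ⟨φ, hφ⟩ := hf H hH
    have hinj : φ.Injective :=
      (hcomponents H hH φ hφ).elim (fun h => h ▸ Function.injective_id) (·.1.injective)
    exact hinj (by rw [hφ, hφ, hcc'])
end
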